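/- arXiv:math-ph/0602008 — 10 statements merged into one kernel-verified Lean document; each statement's English description precedes it below -/
import Mathlib

section
/- Every C² function u : ℝ → ℝ satisfying the ordinary differential equation u''(x) + exp(2u(x)) = 0 for all x ∈ ℝ is of the form u(x) = -ln((1/|c|)·cosh(c·x + c')) for some real constants c ≠ 0 and c'; i.e., this formula gives the most general solution of the elliptic Liouville equation depending only on x. -/
/-!
Along a solution the energy `u'² + exp (2u)` is conserved; call it `c²` with `c > 0`. Then
`w = exp (-u)` satisfies the linear equation `w'' = c² w`, so `w = A cosh (cx) + B sinh (cx)`,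
and the conserved energy at `0` gives `A² - B² = 1 / c²` with `A > 0`. Such a combination is a
single shifted hyperbolic cosine `(1 / c) cosh (cx + c')`, and `u = -log w`.
-/

open Real

theorem eq_cosh_sinh_of_hasDerivAt_sq_mul {c : ℝ} (hc : c ≠ 0) {w p : ℝ → ℝ}
    (hw : ∀ x, HasDerivAt w (p x) x) (hp : ∀ x, HasDerivAt p (c ^ 2 * w x) x) (x : ℝ) :
    w x = w 0 * cosh (c * x) + p 0 / c * sinh (c * x) := by
  have hcosh : ∀ x, HasDerivAt (fun x => cosh (c * x)) (sinh (c * x) * c) x := fun x => by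
    simpa using ((hasDerivAt_id x).const_mul c).cosh
  have hsinh : ∀ x, HasDerivAt (fun x => sinh (c * x)) (cosh (c * x) * c) x := fun x => by
    simpa using ((hasDerivAt_id x).const_mul c).sinh
  -- `(w, p / c)` is rotated hyperbolically by `c x`; undoing the rotation gives two constants.
  have hconst₁ : ∀ x, HasDerivAt (fun x => w x * cosh (c * x) - p x / c * sinh (c * x)) 0 x :=
    fun x => (((hw x).mul (hcosh x)).sub (((hp x).div_const c).mul (hsinh x))).congr_deriv
      (by field_simp; ring)
  have hconst₂ : ∀ x, HasDerivAt (fun x => p x / c * cosh (c * x) - w x * sinh (c * x)) 0 x :=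
    fun x => ((((hp x).div_const c).mul (hcosh x)).sub ((hw x).mul (hsinh x))).congr_deriv
      (by field_simp; ring)
  have h₁ := is_const_of_deriv_eq_zero (fun y => (hconst₁ y).differentiableAt)
    (fun y => (hconst₁ y).deriv) x 0
  have h₂ := is_const_of_deriv_eq_zero (fun y => (hconst₂ y).differentiableAt)
    (fun y => (hconst₂ y).deriv) x 0
  simp only [mul_zero, cosh_zero, sinh_zero] at h₁ h₂
  linear_combination cosh (c * x) * h₁ + sinh (c * x) * h₂ - w x * cosh_sq_sub_sinh_sq (c * x)

theorem exists_mul_cosh_add_mul_sinh_eq {A B r : ℝ} (hA : 0 < A) (hr : 0 < r)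
    (hAB : A ^ 2 - B ^ 2 = r ^ 2) : ∃ c', ∀ t, A * cosh t + B * sinh t = r * cosh (t + c') := by
  have hcosh : cosh (arsinh (B / r)) = A / r := by
    rw [cosh_arsinh, sqrt_eq_iff_mul_self_eq_of_pos (by positivity)]
    field_simp
    linarith
  refine ⟨arsinh (B / r), fun t => ?_⟩
  rw [cosh_add, hcosh, sinh_arsinh]
  field_simp

namespace LiouvilleODE

variable {u u' : ℝ → ℝ}

theorem energy_eq (hu : ∀ x, HasDerivAt u (u' x) x)
    (hu' : ∀ x, HasDerivAt u' (-exp (2 * u x)) x) (x : ℝ) :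
    u' x ^ 2 + exp (2 * u x) = u' 0 ^ 2 + exp (2 * u 0) := by
  have hderiv : ∀ x, HasDerivAt (fun x => u' x ^ 2 + exp (2 * u x)) 0 x := fun x =>
    (((hu' x).pow 2).add ((hu x).const_mul 2).exp).congr_deriv (by ring)
  exact is_const_of_deriv_eq_zero (fun y => (hderiv y).differentiableAt)
    (fun y => (hderiv y).deriv) x 0

theorem hasDerivAt_exp_neg (hu : ∀ x, HasDerivAt u (u' x) x) (x : ℝ) :
    HasDerivAt (fun x => exp (-u x)) (-u' x * exp (-u x)) x := by
  simpa [mul_comm] using (hu x).neg.exp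

theorem hasDerivAt_neg_mul_exp_neg (hu : ∀ x, HasDerivAt u (u' x) x)
    (hu' : ∀ x, HasDerivAt u' (-exp (2 * u x)) x) (x : ℝ) :
    HasDerivAt (fun x => -u' x * exp (-u x))
      ((u' 0 ^ 2 + exp (2 * u 0)) * exp (-u x)) x := by
  refine ((hu' x).neg.mul (hasDerivAt_exp_neg hu x)).congr_deriv ?_
  rw [← energy_eq hu hu' x, Pi.neg_apply]
  ring

end LiouvilleODE

open LiouvilleODE in
/-- Every C² function `u : ℝ → ℝ` satisfying `u'' + exp(2u) = 0` on all of ℝ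
is of the form `u(x) = -ln((1/|c|)·cosh(c·x + c'))` for some `c ≠ 0` and `c'`. -/
theorem liouville_ode_general_solution (u : ℝ → ℝ) (hu : ContDiff ℝ 2 u)
    (heq : ∀ x : ℝ, deriv (deriv u) x + Real.exp (2 * u x) = 0) :
    ∃ c c' : ℝ, c ≠ 0 ∧
      ∀ x : ℝ, u x = -Real.log ((1 / |c|) * Real.cosh (c * x + c')) := by
  have hu₁ : ∀ x, HasDerivAt u (deriv u x) x :=
    fun x => (hu.differentiable (by norm_num) x).hasDerivAt
  have hu₂ : ∀ x, HasDerivAt (deriv u) (-exp (2 * u x)) x := fun x => by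
    have hu_succ : ContDiff ℝ (1 + 1) u := hu
    rw [← eq_neg_of_add_eq_zero_left (heq x)]
    exact ((contDiff_succ_iff_deriv.mp hu_succ).2.2.differentiable one_ne_zero x).hasDerivAt
  have hE : 0 < deriv u 0 ^ 2 + exp (2 * u 0) := by positivity
  set c := √(deriv u 0 ^ 2 + exp (2 * u 0))
  have hc : 0 < c := sqrt_pos.mpr hE
  have hw := eq_cosh_sinh_of_hasDerivAt_sq_mul hc.ne' (hasDerivAt_exp_neg hu₁)
    (by simpa only [c, sq_sqrt hE.le] using hasDerivAt_neg_mul_exp_neg hu₁ hu₂)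
  have hAB : exp (-u 0) ^ 2 - (-deriv u 0 * exp (-u 0) / c) ^ 2 = (1 / c) ^ 2 := by
    have hexp : exp (-u 0) ^ 2 * exp (2 * u 0) = 1 := by
      rw [← exp_nat_mul, ← exp_add]; norm_num
    have hc2 : c ^ 2 = deriv u 0 ^ 2 + exp (2 * u 0) := sq_sqrt hE.le
    field_simp
    linear_combination hexp + exp (-u 0) ^ 2 * hc2
  obtain ⟨c', hc'⟩ := exists_mul_cosh_add_mul_sinh_eq (exp_pos _) (one_div_pos.mpr hc) hAB
  refine ⟨c, c', hc.ne', fun x => ?_⟩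
  rw [abs_of_pos hc, ← hc', ← hw x, log_exp, neg_neg]
end

section
/- Let Ω ⊆ ℂ be open and γ : Ω → ℂ holomorphic with γ'(z) ≠ 0 for all z ∈ Ω. Then the function u(x,y) = ln( 2|γ'(z)| / (1 + |γ(z)|²) ), where z = x + iy, is a C² solution of the elliptic Liouville equation u_xx + u_yy + exp(2u) = 0 on Ω (regarded as an open subset of ℝ²). -/
/-- The Liouville solution associated to a generating holomorphic function `γ`:
`u(x,y) = ln( 2|γ'(z)| / (1 + |γ(z)|²) )` with `z = x + iy`. -/
noncomputable def liouvilleSol (γ : ℂ → ℂ) (p : ℝ × ℝ) : ℝ :=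
  Real.log (2 * ‖deriv γ ((p.1 : ℂ) + (p.2 : ℂ) * Complex.I)‖ /
    (1 + ‖γ ((p.1 : ℂ) + (p.2 : ℂ) * Complex.I)‖ ^ 2))

section LiouvilleAux

open Complex

/-- The Liouville solution as a function of a complex variable. -/
noncomputable def uu (γ : ℂ → ℂ) (z : ℂ) : ℝ :=
  Real.log (2 * ‖deriv γ z‖ / (1 + ‖γ z‖ ^ 2))

/-- Real inner product of two complex numbers: `Re(conj a * b)`. -/
def Rp (a b : ℂ) : ℝ := a.re*b.re + a.im*b.im

lemma Rp_self (a : ℂ) : Rp a a = Complex.normSq a := by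
  simp [Rp, Complex.normSq_apply]

lemma Rp_neg (a b : ℂ) : Rp a (-b) = -Rp a b := by simp [Rp]; ring

lemma Rp_sq_add (a b : ℂ) : Rp a b^2 + Rp a (Complex.I*b)^2
    = Complex.normSq a * Complex.normSq b := by
  simp [Rp, Complex.normSq_apply, Complex.mul_re, Complex.mul_im]
  ring

lemma lineDeriv1 {f : ℂ → ℂ} {z : ℂ} (hf : DifferentiableAt ℂ f z) (a d : ℂ) (t : ℝ)
    (hz : a + t*d = z) : HasDerivAt (fun t' : ℝ => f (a + t'*d)) (d * deriv f z) t := by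
  subst hz
  have h1 : HasDerivAt (fun t' : ℝ => a + (t' : ℂ)*d) d t := by
    simpa using ((hasDerivAt_id (t:ℝ)).ofReal_comp.mul_const d).const_add a
  have h2 := (hf.hasDerivAt.hasFDerivAt.restrictScalars ℝ).comp_hasDerivAt (l := f) t h1
  simpa [Function.comp_def, mul_comm] using h2

lemma lineDeriv_re {g : ℝ → ℂ} {g' : ℂ} {t : ℝ} (hg : HasDerivAt g g' t) :
    HasDerivAt (fun t' => (g t').re) g'.re t :=
  (Complex.reCLM.hasFDerivAt.comp_hasDerivAt t hg :)

lemma lineDeriv_im {g : ℝ → ℂ} {g' : ℂ} {t : ℝ} (hg : HasDerivAt g g' t) :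
    HasDerivAt (fun t' => (g t').im) g'.im t :=
  (Complex.imCLM.hasFDerivAt.comp_hasDerivAt t hg :)

lemma lineDeriv_Rp {g h : ℝ → ℂ} {g' h' : ℂ} {t : ℝ}
    (hg : HasDerivAt g g' t) (hh : HasDerivAt h h' t) :
    HasDerivAt (fun s => Rp (g s) (h s)) (Rp g' (h t) + Rp (g t) h') t := by
  have h1 := ((lineDeriv_re hg).mul (lineDeriv_re hh)).add
    ((lineDeriv_im hg).mul (lineDeriv_im hh))
  simp only [Rp]
  exact h1.congr_deriv (by ring)

lemma lineDeriv_normSq {g : ℝ → ℂ} {g' : ℂ} {t : ℝ} (hg : HasDerivAt g g' t) :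
    HasDerivAt (fun t' => Complex.normSq (g t')) (2 * Rp (g t) g') t := by
  have h1 := lineDeriv_Rp hg hg
  simp only [← Rp_self]
  convert h1 using 1
  simp [Rp]; ring

/-- The second derivative of the Liouville solution along the line `t ↦ a + t d`. -/
lemma key (γ : ℂ → ℂ) (Ω : Set ℂ) (hΩ : IsOpen Ω) (hA : AnalyticOnNhd ℂ γ Ω)
    (hγ' : ∀ z ∈ Ω, deriv γ z ≠ 0) (a d : ℂ) (t : ℝ) (z : ℂ) (hzeq : a + t*d = z)
    (hz : z ∈ Ω) :
    deriv (deriv (fun t' : ℝ => uu γ (a + t'*d))) t =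
      ((Complex.normSq (d * deriv (deriv γ) z)
          + Rp (deriv γ z) (d*d* deriv (deriv (deriv γ)) z)) / Complex.normSq (deriv γ z)
        - 2 * (Rp (deriv γ z) (d * deriv (deriv γ) z))^2 / (Complex.normSq (deriv γ z))^2)
      - (2 * (Complex.normSq (d * deriv γ z)
          + Rp (γ z) (d*d* deriv (deriv γ) z)) / (1 + Complex.normSq (γ z))
        - 4 * (Rp (γ z) (d * deriv γ z))^2 / (1 + Complex.normSq (γ z))^2) := by
  have hA1 : AnalyticOnNhd ℂ (deriv γ) Ω := hA.deriv
  have hA2 : AnalyticOnNhd ℂ (deriv (deriv γ)) Ω := hA1.deriv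
  have hA3 : AnalyticOnNhd ℂ (deriv (deriv (deriv γ))) Ω := hA2.deriv
  set γ₁ := deriv γ
  set γ₂ := deriv γ₁
  set γ₃ := deriv γ₂
  have hUopen : IsOpen {t' : ℝ | a + t'*d ∈ Ω} := by
    apply IsOpen.preimage ?_ hΩ
    exact continuous_const.add (Complex.continuous_ofReal.mul continuous_const)
  have hUt : t ∈ {t' : ℝ | a + t'*d ∈ Ω} := by simpa [hzeq] using hz
  -- the first-derivative function
  set Φ : ℝ → ℝ := fun s =>
    Rp (γ₁ (a + s*d)) (d * γ₂ (a + s*d)) / Complex.normSq (γ₁ (a + s*d))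
    - 2 * Rp (γ (a + s*d)) (d * γ₁ (a + s*d)) / (1 + Complex.normSq (γ (a + s*d))) with hΦ
  -- Step A
  have stepA : ∀ t' ∈ {t' : ℝ | a + t'*d ∈ Ω},
      HasDerivAt (fun s : ℝ => uu γ (a + s*d)) (Φ t') t' := by
    intro t' ht'
    set z' := a + t'*d with hz'
    have hz'Ω : z' ∈ Ω := ht'
    have hg0 : γ₁ z' ≠ 0 := hγ' _ hz'Ω
    have hN1 : Complex.normSq (γ₁ z') ≠ 0 := by
      simpa [Complex.normSq_eq_zero] using hg0
    have hN2 : (1 : ℝ) + Complex.normSq (γ z') ≠ 0 := by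
      have := Complex.normSq_nonneg (γ z'); linarith
    have L0 : HasDerivAt (fun s : ℝ => γ (a + s*d)) (d * γ₁ z') t' :=
      lineDeriv1 (hA z' hz'Ω).differentiableAt a d t' rfl
    have L1 : HasDerivAt (fun s : ℝ => γ₁ (a + s*d)) (d * γ₂ z') t' :=
      lineDeriv1 (hA1 z' hz'Ω).differentiableAt a d t' rfl
    have h1 : HasDerivAt (fun s : ℝ => Real.log (Complex.normSq (γ₁ (a + s*d))))
        ((2 * Rp (γ₁ z') (d * γ₂ z')) / Complex.normSq (γ₁ z')) t' :=
      (lineDeriv_normSq L1).log hN1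
    have h2 : HasDerivAt (fun s : ℝ => Real.log (1 + Complex.normSq (γ (a + s*d))))
        ((2 * Rp (γ z') (d * γ₁ z')) / (1 + Complex.normSq (γ z'))) t' :=
      (((lineDeriv_normSq L0).const_add 1).log hN2)
    have h3 := (((h1.const_mul (1/2:ℝ)).sub h2).const_add (Real.log 2))
    have hval : (1/2:ℝ) * ((2 * Rp (γ₁ z') (d * γ₂ z')) / Complex.normSq (γ₁ z'))
        - (2 * Rp (γ z') (d * γ₁ z')) / (1 + Complex.normSq (γ z')) = Φ t' := by
      rw [hΦ]; ring
    rw [hval] at h3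
    apply h3.congr_of_eventuallyEq
    filter_upwards [hUopen.mem_nhds ht'] with s hs
    have hg0s : ‖γ₁ (a + s*d)‖ ≠ 0 := by
      simpa using hγ' _ hs
    have hg0s' : (0:ℝ) < ‖γ₁ (a + s*d)‖ :=
      lt_of_le_of_ne (norm_nonneg _) (Ne.symm hg0s)
    have hb : (0:ℝ) < 1 + ‖γ (a + s*d)‖ ^ 2 := by positivity
    rw [uu, Real.log_div (by positivity) (ne_of_gt hb),
      Real.log_mul (by norm_num) hg0s]
    simp only [Pi.sub_apply]
    rw [← Complex.sq_norm, ← Complex.sq_norm, Real.log_pow]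
    push_cast
    ring
  -- Step B
  have stepB : deriv (fun s : ℝ => uu γ (a + s*d)) =ᶠ[nhds t] Φ := by
    filter_upwards [hUopen.mem_nhds hUt] with s hs
    exact (stepA s hs).deriv
  rw [stepB.deriv_eq]
  -- Step C : differentiate Φ at t
  have hg0 : γ₁ z ≠ 0 := hγ' _ hz
  have hN1 : Complex.normSq (γ₁ z) ≠ 0 := by
    simpa [Complex.normSq_eq_zero] using hg0
  have hN2 : (1 : ℝ) + Complex.normSq (γ z) ≠ 0 := by
    have := Complex.normSq_nonneg (γ z); linarith
  have L0 : HasDerivAt (fun s : ℝ => γ (a + s*d)) (d * γ₁ z) t :=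
    lineDeriv1 (hA z hz).differentiableAt a d t hzeq
  have L1 : HasDerivAt (fun s : ℝ => γ₁ (a + s*d)) (d * γ₂ z) t :=
    lineDeriv1 (hA1 z hz).differentiableAt a d t hzeq
  have L2 : HasDerivAt (fun s : ℝ => γ₂ (a + s*d)) (d * γ₃ z) t :=
    lineDeriv1 (hA2 z hz).differentiableAt a d t hzeq
  have L1d : HasDerivAt (fun s : ℝ => d * γ₁ (a + s*d)) (d * (d * γ₂ z)) t := L1.const_mul d
  have L2d : HasDerivAt (fun s : ℝ => d * γ₂ (a + s*d)) (d * (d * γ₃ z)) t := L2.const_mul d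
  have hzt : a + (t:ℂ)*d = z := hzeq
  have hA' : HasDerivAt (fun s : ℝ => Rp (γ₁ (a + s*d)) (d * γ₂ (a + s*d)))
      (Rp (d * γ₂ z) (d * γ₂ z) + Rp (γ₁ z) (d * (d * γ₃ z))) t := by
    have := lineDeriv_Rp L1 L2d
    rw [hzt] at this; exact this
  have hB' : HasDerivAt (fun s : ℝ => Complex.normSq (γ₁ (a + s*d)))
      (2 * Rp (γ₁ z) (d * γ₂ z)) t := by
    have := lineDeriv_normSq L1
    rw [hzt] at this; exact this
  have hC' : HasDerivAt (fun s : ℝ => 2 * Rp (γ (a + s*d)) (d * γ₁ (a + s*d)))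
      (2 * (Rp (d * γ₁ z) (d * γ₁ z) + Rp (γ z) (d * (d * γ₂ z)))) t := by
    have := (lineDeriv_Rp L0 L1d).const_mul (2:ℝ)
    rw [hzt] at this; exact this
  have hD' : HasDerivAt (fun s : ℝ => (1:ℝ) + Complex.normSq (γ (a + s*d)))
      (2 * Rp (γ z) (d * γ₁ z)) t := by
    have := (lineDeriv_normSq L0).const_add (1:ℝ)
    rw [hzt] at this; exact this
  have hN1' : Complex.normSq (γ₁ (a + (t:ℂ)*d)) ≠ 0 := by rw [hzt]; exact hN1
  have hN2' : (1:ℝ) + Complex.normSq (γ (a + (t:ℂ)*d)) ≠ 0 := by rw [hzt]; exact hN2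
  have big := (hA'.div hB' hN1').sub (hC'.div hD' hN2')
  rw [hzt] at big
  rw [HasDerivAt.deriv (f := Φ) big]
  rw [Rp_self, Rp_self]
  have e1 : d * (d * γ₃ z) = d * d * γ₃ z := by ring
  have e2 : d * (d * γ₂ z) = d * d * γ₂ z := by ring
  rw [e1, e2]
  field_simp
  ring

lemma uu_eq (γ : ℂ → ℂ) (z : ℂ) (h : deriv γ z ≠ 0) :
    uu γ z = Real.log 2 + (1/2)*Real.log (Complex.normSq (deriv γ z))
      - Real.log (1 + Complex.normSq (γ z)) := by
  have hg0 : ‖deriv γ z‖ ≠ 0 := by simpa using h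
  have hb : (0:ℝ) < 1 + ‖γ z‖ ^ 2 := by positivity
  rw [uu, Real.log_div (by positivity) (ne_of_gt hb), Real.log_mul (by norm_num) hg0]
  rw [← Complex.sq_norm, ← Complex.sq_norm (γ z), Real.log_pow]
  push_cast
  ring

lemma contDiff_normSq' : ContDiff ℝ 2 Complex.normSq := by
  have : Complex.normSq = fun w : ℂ => w.re*w.re + w.im*w.im := by
    funext w; exact Complex.normSq_apply w
  rw [this]
  exact (Complex.reCLM.contDiff.mul Complex.reCLM.contDiff).add
    (Complex.imCLM.contDiff.mul Complex.imCLM.contDiff)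

end LiouvilleAux

/-- If `Ω ⊆ ℂ` is open and `γ : Ω → ℂ` is holomorphic with `γ'(z) ≠ 0` on `Ω`,
then `u(x,y) = ln(2|γ'(z)|/(1+|γ(z)|²))`, `z = x+iy`, is a C² solution of the elliptic
Liouville equation `u_xx + u_yy + exp(2u) = 0` on `Ω` regarded as an open subset of ℝ². -/
theorem liouville_generating_function_solution (Ω : Set ℂ) (hΩ : IsOpen Ω)
    (γ : ℂ → ℂ) (hγ : DifferentiableOn ℂ γ Ω)
    (hγ' : ∀ z ∈ Ω, deriv γ z ≠ 0) :
    ContDiffOn ℝ 2 (liouvilleSol γ) {p : ℝ × ℝ | (p.1 : ℂ) + (p.2 : ℂ) * Complex.I ∈ Ω} ∧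
    ∀ x y : ℝ, (x : ℂ) + (y : ℂ) * Complex.I ∈ Ω →
      deriv (deriv (fun x' : ℝ => liouvilleSol γ (x', y))) x
        + deriv (deriv (fun y' : ℝ => liouvilleSol γ (x, y'))) y
        + Real.exp (2 * liouvilleSol γ (x, y)) = 0 := by
  have hA : AnalyticOnNhd ℂ γ Ω := hγ.analyticOnNhd hΩ
  constructor
  · -- smoothness
    have hA1 : AnalyticOnNhd ℂ (deriv γ) Ω := hA.deriv
    have he : ContDiff ℝ 2 (fun p : ℝ × ℝ => (p.1 : ℂ) + (p.2 : ℂ) * Complex.I) :=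
      (Complex.ofRealCLM.contDiff.comp contDiff_fst).add
        ((Complex.ofRealCLM.contDiff.comp contDiff_snd).mul contDiff_const)
    have hopen : IsOpen {p : ℝ × ℝ | (p.1 : ℂ) + (p.2 : ℂ) * Complex.I ∈ Ω} :=
      IsOpen.preimage he.continuous hΩ
    intro p hp
    apply ContDiffAt.contDiffWithinAt
    set ep := ((p.1 : ℂ) + (p.2 : ℂ) * Complex.I) with hep
    have hpΩ : ep ∈ Ω := hp
    have hγe : ContDiffAt ℝ 2 (fun q : ℝ × ℝ => γ ((q.1 : ℂ) + (q.2 : ℂ) * Complex.I)) p :=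
      ((hA ep hpΩ).contDiffAt.restrict_scalars ℝ).comp p he.contDiffAt
    have hγ1e : ContDiffAt ℝ 2
        (fun q : ℝ × ℝ => deriv γ ((q.1 : ℂ) + (q.2 : ℂ) * Complex.I)) p :=
      ((hA1 ep hpΩ).contDiffAt.restrict_scalars ℝ).comp (g := deriv γ) p he.contDiffAt
    have hn1 : Complex.normSq (deriv γ ep) ≠ 0 := by
      simpa [Complex.normSq_eq_zero] using hγ' _ hpΩ
    have hn2 : (1:ℝ) + Complex.normSq (γ ep) ≠ 0 := by
      have := Complex.normSq_nonneg (γ ep); linarith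
    have hG : ContDiffAt ℝ 2 (fun q : ℝ × ℝ =>
        Real.log 2
          + (1/2)*Real.log (Complex.normSq (deriv γ ((q.1 : ℂ) + (q.2 : ℂ) * Complex.I)))
          - Real.log (1 + Complex.normSq (γ ((q.1 : ℂ) + (q.2 : ℂ) * Complex.I)))) p := by
      apply ContDiffAt.sub
      · exact contDiffAt_const.add (contDiffAt_const.mul
          ((Real.contDiffAt_log.2 hn1).comp (g := Real.log) p (contDiff_normSq'.contDiffAt.comp p hγ1e)))
      · exact (Real.contDiffAt_log.2 hn2).comp p
          (contDiffAt_const.add (contDiff_normSq'.contDiffAt.comp p hγe))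
    apply hG.congr_of_eventuallyEq
    filter_upwards [hopen.mem_nhds hp] with q hq
    have : liouvilleSol γ q = uu γ ((q.1 : ℂ) + (q.2 : ℂ) * Complex.I) := rfl
    rw [this, uu_eq γ _ (hγ' _ hq)]
  · -- the PDE
    intro x y hxy
    set z : ℂ := (x:ℂ) + (y:ℂ)*Complex.I with hzdef
    have e1 : (fun x' : ℝ => liouvilleSol γ (x', y))
        = (fun t' : ℝ => uu γ ((y:ℂ)*Complex.I + (t':ℂ)*1)) := by
      funext t'
      have : ((y:ℂ)*Complex.I + (t':ℂ)*1) = (t':ℂ) + (y:ℂ)*Complex.I := by ring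
      simp only [liouvilleSol, uu, this]
    have e2 : (fun y' : ℝ => liouvilleSol γ (x, y'))
        = (fun t' : ℝ => uu γ ((x:ℂ) + (t':ℂ)*Complex.I)) := by
      funext t'
      simp only [liouvilleSol, uu]
    have e3 : liouvilleSol γ (x, y) = uu γ z := by simp only [liouvilleSol, uu, hzdef]
    rw [e1, e2, e3,
      key γ Ω hΩ hA hγ' ((y:ℂ)*Complex.I) 1 x z (by rw [hzdef]; try ring) hxy,
      key γ Ω hΩ hA hγ' (x:ℂ) Complex.I y z (by rw [hzdef]; try ring) hxy]
    -- exp term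
    have hg0 : ‖deriv γ z‖ ≠ 0 := by simpa using hγ' _ hxy
    have hg0' : (0:ℝ) < ‖deriv γ z‖ :=
      lt_of_le_of_ne (norm_nonneg _) (Ne.symm hg0)
    have hb : (0:ℝ) < 1 + ‖γ z‖ ^ 2 := by positivity
    have hexp : Real.exp (2 * uu γ z)
        = 4 * Complex.normSq (deriv γ z) / (1 + Complex.normSq (γ z))^2 := by
      rw [uu, show (2:ℝ) * Real.log (2 * ‖deriv γ z‖
            / (1 + ‖γ z‖ ^ 2))
          = Real.log ((2 * ‖deriv γ z‖ / (1 + ‖γ z‖ ^ 2))^2) by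
        rw [Real.log_pow]; push_cast; ring,
        Real.exp_log (by positivity)]
      rw [div_pow, mul_pow, Complex.sq_norm, ← Complex.sq_norm (γ z)]
      norm_num
    rw [hexp]
    -- simplify the direction factors d = 1 and d = I
    simp only [one_mul, mul_one, Complex.I_mul_I, neg_one_mul, Rp_neg,
      Complex.normSq_mul, Complex.normSq_I]
    -- pure algebra
    set a0 := Complex.normSq (γ z) with ha0
    set a1 := Complex.normSq (deriv γ z) with ha1
    set a2 := Complex.normSq (deriv (deriv γ) z) with ha2
    set p := Rp (deriv γ z) (deriv (deriv γ) z) with hp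
    set p' := Rp (deriv γ z) (Complex.I * deriv (deriv γ) z) with hp'
    set q := Rp (γ z) (deriv γ z) with hq
    set q' := Rp (γ z) (Complex.I * deriv γ z) with hq'
    set c3 := Rp (deriv γ z) (deriv (deriv (deriv γ)) z) with hc3
    set c2 := Rp (γ z) (deriv (deriv γ) z) with hc2
    have hpp : p^2 + p'^2 = a1*a2 := Rp_sq_add _ _
    have hqq : q^2 + q'^2 = a0*a1 := Rp_sq_add _ _
    have hp2 : p'^2 = a1*a2 - p^2 := by linarith
    have hq2 : q'^2 = a0*a1 - q^2 := by linarith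
    have hN1 : a1 ≠ 0 := by
      rw [ha1]; simpa [Complex.normSq_eq_zero] using hγ' _ hxy
    have hN2 : (1:ℝ) + a0 ≠ 0 := by
      have := Complex.normSq_nonneg (γ z); rw [ha0]; linarith
    rw [hp2, hq2]
    field_simp
    ring
end

section
/- Let Ω ⊆ ℂ be open and β : Ω → ℂ holomorphic with β'(z) ≠ 0 for all z ∈ Ω. Then the function u(x,y) = -ln( cosh(Re β(z)) / |β'(z)| ), where z = x + iy, is a C² solution of the elliptic Liouville equation u_xx + u_yy + exp(2u) = 0 on Ω (regarded as an open subset of ℝ²). -/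
open Complex Filter

lemma lsb_hasDerivAt_line {f : ℂ → ℂ} {c : ℂ} (w d : ℂ) {t : ℝ}
    (hf : HasDerivAt f c (w + t * d)) :
    HasDerivAt (fun s : ℝ => f (w + s * d)) (c * d) t := by
  have h0 : HasDerivAt (fun s : ℝ => (s : ℂ)) 1 t := by
    exact Complex.ofRealCLM.hasDerivAt
  have h1 : HasDerivAt (fun s : ℝ => w + (s : ℂ) * d) d t := by
    simpa using (h0.mul_const d).const_add w
  have h2 := (hf.hasFDerivAt.restrictScalars ℝ).comp_hasDerivAt t h1
  simpa [mul_comm, Function.comp_def] using h2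

lemma lsb_hasDerivAt_line_re {f : ℂ → ℂ} {c : ℂ} (w d : ℂ) {t : ℝ}
    (hf : HasDerivAt f c (w + t * d)) :
    HasDerivAt (fun s : ℝ => (f (w + s * d)).re) ((c * d).re) t := by
  have := Complex.reCLM.hasFDerivAt.comp_hasDerivAt t (lsb_hasDerivAt_line w d hf)
  simpa [Function.comp_def] using this

lemma lsb_hasDerivAt_tanh (x : ℝ) : HasDerivAt Real.tanh (1 / Real.cosh x ^ 2) x := by
  have h := (Real.hasDerivAt_sinh x).div (Real.hasDerivAt_cosh x) (Real.cosh_pos x).ne'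
  have heq : (Real.sinh / Real.cosh) = Real.tanh := by
    funext y; rw [Pi.div_apply, Real.tanh_eq_sinh_div_cosh]
  rw [heq] at h
  have h3 : Real.cosh x * Real.cosh x - Real.sinh x * Real.sinh x = 1 := by
    nlinarith [Real.cosh_sq_sub_sinh_sq x]
  rw [h3] at h
  exact h


lemma lsb_line_second {β L : ℂ → ℂ} {B : Set ℂ} (hB : IsOpen B)
    (hβ : AnalyticOnNhd ℂ β B) (hβ' : ∀ z ∈ B, deriv β z ≠ 0)
    (hL : AnalyticOnNhd ℂ L B)
    (hLre : ∀ z ∈ B, (L z).re = Real.log (‖deriv β z‖))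
    (w d : ℂ) (t : ℝ) (hz : w + t * d ∈ B) :
    deriv (deriv (fun s : ℝ =>
        -Real.log (Real.cosh ((β (w + s * d)).re) / ‖deriv β (w + s * d)‖))) t
      = -((1 / Real.cosh ((β (w + t * d)).re) ^ 2) * ((deriv β (w + t * d) * d).re) ^ 2
          + Real.tanh ((β (w + t * d)).re) * (deriv (deriv β) (w + t * d) * d * d).re)
        + (deriv (deriv L) (w + t * d) * d * d).re := by
  have hZc : Continuous (fun s : ℝ => w + (s : ℂ) * d) := by continuity
  have hU : IsOpen {s : ℝ | w + (s : ℂ) * d ∈ B} := hB.preimage hZc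
  have hUt : {s : ℝ | w + (s : ℂ) * d ∈ B} ∈ nhds t := hU.mem_nhds hz
  have hEq : (fun s : ℝ =>
      -Real.log (Real.cosh ((β (w + (s:ℂ) * d)).re) / ‖deriv β (w + (s:ℂ) * d)‖))
        =ᶠ[nhds t] (fun s : ℝ => -Real.log (Real.cosh ((β (w + (s:ℂ) * d)).re))
          + (L (w + (s:ℂ) * d)).re) := by
    filter_upwards [hUt] with s hs
    have hc : (0:ℝ) < Real.cosh ((β (w + (s:ℂ) * d)).re) := Real.cosh_pos _
    have ha : (0:ℝ) < ‖deriv β (w + (s:ℂ) * d)‖ := norm_pos_iff.mpr (hβ' _ hs)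
    rw [Real.log_div hc.ne' ha.ne', hLre _ hs]; ring
  have key1 : ∀ s : ℝ, w + (s:ℂ) * d ∈ B →
      HasDerivAt (fun s : ℝ => -Real.log (Real.cosh ((β (w + (s:ℂ) * d)).re))
          + (L (w + (s:ℂ) * d)).re)
        (-(Real.tanh ((β (w + (s:ℂ) * d)).re) * (deriv β (w + (s:ℂ) * d) * d).re)
          + (deriv L (w + (s:ℂ) * d) * d).re) s := by
    intro s hs
    have hβd : HasDerivAt β (deriv β (w + (s:ℂ) * d)) (w + (s:ℂ) * d) :=
      ((hβ _ hs).differentiableAt).hasDerivAt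
    have hV : HasDerivAt (fun s' : ℝ => (β (w + (s':ℂ) * d)).re)
        ((deriv β (w + (s:ℂ) * d) * d).re) s := lsb_hasDerivAt_line_re w d hβd
    have hcosh : HasDerivAt (fun s' : ℝ => Real.cosh ((β (w + (s':ℂ) * d)).re))
        (Real.sinh ((β (w + (s:ℂ) * d)).re) * ((deriv β (w + (s:ℂ) * d) * d).re)) s := by
      simpa [Function.comp_def] using
        (Real.hasDerivAt_cosh ((β (w + (s:ℂ) * d)).re)).comp s hV
    have hlog : HasDerivAt (fun s' : ℝ => Real.log (Real.cosh ((β (w + (s':ℂ) * d)).re)))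
        ((Real.cosh ((β (w + (s:ℂ) * d)).re))⁻¹ *
          (Real.sinh ((β (w + (s:ℂ) * d)).re) * ((deriv β (w + (s:ℂ) * d) * d).re))) s := by
      simpa [Function.comp_def] using
        (Real.hasDerivAt_log (Real.cosh_pos ((β (w + (s:ℂ) * d)).re)).ne').comp s hcosh
    have hLd : HasDerivAt L (deriv L (w + (s:ℂ) * d)) (w + (s:ℂ) * d) :=
      ((hL _ hs).differentiableAt).hasDerivAt
    have hX : HasDerivAt (fun s' : ℝ => (L (w + (s':ℂ) * d)).re)
        ((deriv L (w + (s:ℂ) * d) * d).re) s := lsb_hasDerivAt_line_re w d hLd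
    have hsum := hlog.neg.add hX
    refine hsum.congr_deriv ?_
    rw [Real.tanh_eq_sinh_div_cosh]; ring
  have hderiv_ev : deriv (fun s : ℝ => -Real.log (Real.cosh ((β (w + (s:ℂ) * d)).re))
          + (L (w + (s:ℂ) * d)).re)
      =ᶠ[nhds t] (fun s : ℝ =>
        -(Real.tanh ((β (w + (s:ℂ) * d)).re) * (deriv β (w + (s:ℂ) * d) * d).re)
          + (deriv L (w + (s:ℂ) * d) * d).re) := by
    filter_upwards [hUt] with s hs
    exact (key1 s hs).deriv
  have hβd : HasDerivAt β (deriv β (w + (t:ℂ) * d)) (w + (t:ℂ) * d) :=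
    ((hβ _ hz).differentiableAt).hasDerivAt
  have hV : HasDerivAt (fun s' : ℝ => (β (w + (s':ℂ) * d)).re)
      ((deriv β (w + (t:ℂ) * d) * d).re) t := lsb_hasDerivAt_line_re w d hβd
  have htanh : HasDerivAt (fun s' : ℝ => Real.tanh ((β (w + (s':ℂ) * d)).re))
      ((1 / Real.cosh ((β (w + (t:ℂ) * d)).re) ^ 2) * ((deriv β (w + (t:ℂ) * d) * d).re)) t := by
    simpa [Function.comp_def] using
      (lsb_hasDerivAt_tanh ((β (w + (t:ℂ) * d)).re)).comp t hV
  have hb : HasDerivAt (fun z => deriv β z * d) (deriv (deriv β) (w + (t:ℂ) * d) * d)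
      (w + (t:ℂ) * d) := (((hβ.deriv) _ hz).differentiableAt).hasDerivAt.mul_const d
  have hW : HasDerivAt (fun s' : ℝ => (deriv β (w + (s':ℂ) * d) * d).re)
      ((deriv (deriv β) (w + (t:ℂ) * d) * d * d).re) t := lsb_hasDerivAt_line_re w d hb
  have hm : HasDerivAt (fun z => deriv L z * d) (deriv (deriv L) (w + (t:ℂ) * d) * d)
      (w + (t:ℂ) * d) := (((hL.deriv) _ hz).differentiableAt).hasDerivAt.mul_const d
  have hX2 : HasDerivAt (fun s' : ℝ => (deriv L (w + (s':ℂ) * d) * d).re)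
      ((deriv (deriv L) (w + (t:ℂ) * d) * d * d).re) t := lsb_hasDerivAt_line_re w d hm
  have hG2 : HasDerivAt (fun s : ℝ =>
        -(Real.tanh ((β (w + (s:ℂ) * d)).re) * (deriv β (w + (s:ℂ) * d) * d).re)
          + (deriv L (w + (s:ℂ) * d) * d).re)
      (-((1 / Real.cosh ((β (w + (t:ℂ) * d)).re) ^ 2) * ((deriv β (w + (t:ℂ) * d) * d).re)
            * ((deriv β (w + (t:ℂ) * d) * d).re)
          + Real.tanh ((β (w + (t:ℂ) * d)).re) * ((deriv (deriv β) (w + (t:ℂ) * d) * d * d).re))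
        + (deriv (deriv L) (w + (t:ℂ) * d) * d * d).re) t :=
    ((htanh.mul hW).neg).add hX2
  calc deriv (deriv (fun s : ℝ =>
        -Real.log (Real.cosh ((β (w + s * d)).re) / ‖deriv β (w + s * d)‖))) t
      = deriv (deriv (fun s : ℝ => -Real.log (Real.cosh ((β (w + (s:ℂ) * d)).re))
          + (L (w + (s:ℂ) * d)).re)) t := (hEq.deriv).deriv_eq
    _ = deriv (fun s : ℝ =>
        -(Real.tanh ((β (w + (s:ℂ) * d)).re) * (deriv β (w + (s:ℂ) * d) * d).re)
          + (deriv L (w + (s:ℂ) * d) * d).re) t := hderiv_ev.deriv_eq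
    _ = _ := by rw [hG2.deriv]; ring


/-- The Liouville solution associated to a holomorphic function `β`:
`u(x,y) = -ln( cosh(Re β(z)) / |β'(z)| )` with `z = x + iy`. -/
noncomputable def liouvilleSolBeta (β : ℂ → ℂ) (p : ℝ × ℝ) : ℝ :=
  -Real.log (Real.cosh ((β ((p.1 : ℂ) + (p.2 : ℂ) * Complex.I)).re) /
    ‖deriv β ((p.1 : ℂ) + (p.2 : ℂ) * Complex.I)‖)

/-- If `Ω ⊆ ℂ` is open and `β : Ω → ℂ` is holomorphic with `β'(z) ≠ 0` on `Ω`,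
then `u(x,y) = -ln(cosh(Re β(z))/|β'(z)|)`, `z = x+iy`, is a C² solution of the elliptic
Liouville equation `u_xx + u_yy + exp(2u) = 0` on `Ω` regarded as an open subset of ℝ². -/
theorem liouville_beta_solution (Ω : Set ℂ) (hΩ : IsOpen Ω)
    (β : ℂ → ℂ) (hβ : DifferentiableOn ℂ β Ω)
    (hβ' : ∀ z ∈ Ω, deriv β z ≠ 0) :
    ContDiffOn ℝ 2 (liouvilleSolBeta β) {p : ℝ × ℝ | (p.1 : ℂ) + (p.2 : ℂ) * Complex.I ∈ Ω} ∧
    ∀ x y : ℝ, (x : ℂ) + (y : ℂ) * Complex.I ∈ Ω →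
      deriv (deriv (fun x' : ℝ => liouvilleSolBeta β (x', y))) x
        + deriv (deriv (fun y' : ℝ => liouvilleSolBeta β (x, y'))) y
        + Real.exp (2 * liouvilleSolBeta β (x, y)) = 0 := by
  have hAn : AnalyticOnNhd ℂ β Ω := hβ.analyticOnNhd hΩ
  have hAn' : AnalyticOnNhd ℂ (deriv β) Ω := hAn.deriv
  have hzc : ContDiff ℝ 2 (fun p : ℝ × ℝ => (p.1 : ℂ) + (p.2 : ℂ) * Complex.I) := by
    apply ContDiff.add
    · exact (Complex.ofRealCLM.contDiff.of_le le_top).comp contDiff_fst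
    · exact ((Complex.ofRealCLM.contDiff.of_le le_top).comp contDiff_snd).mul contDiff_const
  constructor
  · intro p hp
    have hz : (p.1 : ℂ) + (p.2 : ℂ) * Complex.I ∈ Ω := hp
    apply ContDiffAt.contDiffWithinAt
    have hβc : ContDiffAt ℝ 2 (fun q : ℝ × ℝ => β ((q.1:ℂ) + (q.2:ℂ)*Complex.I)) p :=
      (((hAn _ hz).contDiffAt).restrict_scalars ℝ).comp p hzc.contDiffAt
    have hDc : ContDiffAt ℝ 2 (fun q : ℝ × ℝ => deriv β ((q.1:ℂ) + (q.2:ℂ)*Complex.I)) p :=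
      by have h := (((hAn' _ hz).contDiffAt).restrict_scalars ℝ).comp p hzc.contDiffAt; exact h
    have hre : ContDiffAt ℝ 2 (fun q : ℝ × ℝ => (β ((q.1:ℂ)+(q.2:ℂ)*Complex.I)).re) p :=
      (Complex.reCLM.contDiff.of_le le_top).contDiffAt.comp p hβc
    have hcosh : ContDiffAt ℝ 2
        (fun q : ℝ × ℝ => Real.cosh ((β ((q.1:ℂ)+(q.2:ℂ)*Complex.I)).re)) p :=
      (Real.contDiff_cosh.of_le le_top).contDiffAt.comp p hre
    have hDre : ContDiffAt ℝ 2 (fun q : ℝ × ℝ => (deriv β ((q.1:ℂ)+(q.2:ℂ)*Complex.I)).re) p :=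
      (Complex.reCLM.contDiff.of_le le_top).contDiffAt.comp p hDc
    have hDim : ContDiffAt ℝ 2 (fun q : ℝ × ℝ => (deriv β ((q.1:ℂ)+(q.2:ℂ)*Complex.I)).im) p :=
      (Complex.imCLM.contDiff.of_le le_top).contDiffAt.comp p hDc
    have hnsq : ContDiffAt ℝ 2
        (fun q : ℝ × ℝ => Complex.normSq (deriv β ((q.1:ℂ)+(q.2:ℂ)*Complex.I))) p := by
      simp only [Complex.normSq_apply]
      exact (hDre.mul hDre).add (hDim.mul hDim)
    have hne : deriv β ((p.1:ℂ)+(p.2:ℂ)*Complex.I) ≠ 0 := hβ' _ hz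
    have habs : ContDiffAt ℝ 2
        (fun q : ℝ × ℝ => ‖deriv β ((q.1:ℂ)+(q.2:ℂ)*Complex.I)‖) p := by
      have h0 : Complex.normSq (deriv β ((p.1:ℂ)+(p.2:ℂ)*Complex.I)) ≠ 0 :=
        (Complex.normSq_pos.mpr hne).ne'
      have := (Real.contDiffAt_sqrt h0).comp p hnsq
      simpa [Complex.norm_def, Function.comp_def] using this
    have habspos : 0 < ‖deriv β ((p.1:ℂ)+(p.2:ℂ)*Complex.I)‖ :=
      norm_pos_iff.mpr hne
    have hq : ContDiffAt ℝ 2 (fun q : ℝ × ℝ =>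
        Real.cosh ((β ((q.1:ℂ)+(q.2:ℂ)*Complex.I)).re) /
          ‖deriv β ((q.1:ℂ)+(q.2:ℂ)*Complex.I)‖) p :=
      hcosh.div habs habspos.ne'
    have hqpos : 0 < Real.cosh ((β ((p.1:ℂ)+(p.2:ℂ)*Complex.I)).re) /
        ‖deriv β ((p.1:ℂ)+(p.2:ℂ)*Complex.I)‖ :=
      div_pos (Real.cosh_pos _) habspos
    have := (hq.log hqpos.ne').neg
    exact this
  · intro x y hxy
    have hc0ne : deriv β ((x:ℂ) + (y:ℂ) * Complex.I) ≠ 0 := hβ' _ hxy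
    set z₀ : ℂ := (x:ℂ) + (y:ℂ) * Complex.I with hz₀def
    set c0 : ℂ := deriv β z₀ with hc0def
    set B : Set ℂ := Ω ∩ (deriv β) ⁻¹' (Metric.ball c0 (‖c0‖)) with hBdef
    have hBopen : IsOpen B :=
      (hAn'.continuousOn).isOpen_inter_preimage hΩ Metric.isOpen_ball
    have hz₀B : z₀ ∈ B := by
      refine ⟨hxy, ?_⟩
      simp [Metric.mem_ball, ← hc0def, norm_pos_iff.mpr hc0ne]
    have hβB : AnalyticOnNhd ℂ β B := fun z hz => hAn z hz.1
    have hβ'B : ∀ z ∈ B, deriv β z ≠ 0 := fun z hz => hβ' z hz.1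
    have hslit : ∀ z ∈ B, deriv β z / c0 ∈ Complex.slitPlane := by
      intro z hzB
      have hd : ‖deriv β z - c0‖ < ‖c0‖ := by
        have := hzB.2
        simpa [Metric.mem_ball, Complex.dist_eq] using this
      have h1 : ‖deriv β z / c0 - 1‖ < 1 := by
        rw [div_sub_one hc0ne, norm_div]
        exact (div_lt_one (norm_pos_iff.mpr hc0ne)).mpr hd
      have h2 : |(deriv β z / c0 - 1).re| < 1 :=
        lt_of_le_of_lt (Complex.abs_re_le_norm _) h1
      have h3 : -1 < (deriv β z / c0).re - 1 := by
        have := (abs_lt.mp h2).1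
        simpa [Complex.sub_re, Complex.one_re] using this
      exact Or.inl (by linarith)
    have hLan : AnalyticOnNhd ℂ (fun z => Complex.log (deriv β z / c0) + Complex.log c0) B := by
      intro z hzB
      have h1 : AnalyticAt ℂ (fun z => deriv β z / c0) z := by
        have h2 : AnalyticAt ℂ (fun z => deriv β z * c0⁻¹) z :=
          (hAn' z hzB.1).mul analyticAt_const
        simpa [div_eq_mul_inv] using h2
      exact (h1.clog (hslit z hzB)).add analyticAt_const
    have hLre : ∀ z ∈ B,
        ((fun z => Complex.log (deriv β z / c0) + Complex.log c0) z).re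
          = Real.log (‖deriv β z‖) := by
      intro z hzB
      have hne : deriv β z ≠ 0 := hβ' z hzB.1
      simp only [Complex.add_re, Complex.log_re, norm_div]
      rw [Real.log_div (norm_ne_zero_iff.mpr hne) (norm_ne_zero_iff.mpr hc0ne)]
      ring
    -- x-direction
    have hargx : (y:ℂ) * Complex.I + (x:ℂ) * 1 = z₀ := by rw [hz₀def]; ring
    have hx := lsb_line_second hBopen hβB hβ'B hLan hLre ((y:ℂ) * Complex.I) 1 x
      (by rw [hargx]; exact hz₀B)
    rw [hargx] at hx
    have hfx : (fun x' : ℝ => liouvilleSolBeta β (x', y))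
        = fun s : ℝ => -Real.log (Real.cosh ((β ((y:ℂ)*Complex.I + (s:ℂ)*1)).re) /
            ‖deriv β ((y:ℂ)*Complex.I + (s:ℂ)*1)‖) := by
      funext s
      have harg : (s:ℂ) + (y:ℂ)*Complex.I = (y:ℂ)*Complex.I + (s:ℂ)*1 := by ring
      simp only [liouvilleSolBeta, harg]
    -- y-direction
    have hargy : (x:ℂ) + (y:ℂ) * Complex.I = z₀ := by rw [hz₀def]
    have hy := lsb_line_second hBopen hβB hβ'B hLan hLre ((x:ℂ)) Complex.I y
      (by rw [hargy]; exact hz₀B)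
    rw [hargy] at hy
    have hfy : (fun y' : ℝ => liouvilleSolBeta β (x, y'))
        = fun s : ℝ => -Real.log (Real.cosh ((β ((x:ℂ) + (s:ℂ)*Complex.I)).re) /
            ‖deriv β ((x:ℂ) + (s:ℂ)*Complex.I)‖) := by
      funext s
      simp only [liouvilleSolBeta]
    rw [hfx, hfy, hx, hy]
    -- exp term
    have habspos : 0 < ‖c0‖ := norm_pos_iff.mpr hc0ne
    have hcoshpos : 0 < Real.cosh ((β z₀).re) := Real.cosh_pos _
    have hqpos : 0 < Real.cosh ((β z₀).re) / ‖c0‖ := div_pos hcoshpos habspos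
    have hexp : Real.exp (2 * liouvilleSolBeta β (x, y))
        = (‖c0‖) ^ 2 / (Real.cosh ((β z₀).re)) ^ 2 := by
      have hu : liouvilleSolBeta β (x, y)
          = -Real.log (Real.cosh ((β z₀).re) / ‖c0‖) := by
        simp only [liouvilleSolBeta, hz₀def, hc0def]
      rw [hu, mul_neg, Real.exp_neg,
        show (2:ℝ) * Real.log (Real.cosh ((β z₀).re) / ‖c0‖)
          = Real.log ((Real.cosh ((β z₀).re) / ‖c0‖) ^ 2) by
            rw [Real.log_pow]; push_cast; ring,
        Real.exp_log (pow_pos hqpos 2), div_pow, inv_div]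
    rw [hexp]
    -- final arithmetic
    have hre2 : (c0 * Complex.I).re = -c0.im := Complex.mul_I_re c0
    have hII : ∀ u : ℂ, u * Complex.I * Complex.I = -u := by
      intro u; rw [mul_assoc, Complex.I_mul_I, mul_neg_one]
    have habs2 : (‖c0‖) ^ 2 = c0.re ^ 2 + c0.im ^ 2 := by
      rw [Complex.sq_norm, Complex.normSq_apply]; ring
    rw [hre2, hII, hII, habs2]
    simp only [mul_one, Complex.neg_re]
    field_simp
    ring
end

section
/- Let k ∈ ℝ with |k| > 1 and κ = √(k² - 1). Then the function u(x,y) = -ln( cosh(k·x) + (κ/k)·cos(k·y) ) is a C² solution of the elliptic Liouville equation u_xx + u_yy + exp(2u) = 0 on the open set where cosh(k·x) + (κ/k)·cos(k·y) > 0 (in particular on all of ℝ² when k > 1). -/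
/-!
If `D` is `C²` and nonzero, then `u = -log D` satisfies
`Δu + exp (2u) = (|∇D|² - D ΔD + 1) / D²`, so `u` solves Liouville's equation exactly where
`D ΔD - |∇D|² = 1`. For `D = cosh (k x) + c cos (k y)` this quantity is
`k² (cosh² - sinh²) - c² k² (cos² + sin²) = k² (1 - c²)`, which is `1` for `c = κ / k`.
If `k > 1` then `|c| < 1`, so `D ≥ 1 - |c| > 0`.
-/

open Real Topology

theorem deriv_deriv_neg_log {f : ℝ → ℝ} {x : ℝ} (hf : ContDiff ℝ 2 f) (hx : f x ≠ 0) :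
    deriv (deriv fun t => -log (f t)) x
      = (deriv f x ^ 2 - f x * deriv (deriv f) x) / f x ^ 2 := by
  have hf₁ : Differentiable ℝ f := hf.differentiable two_ne_zero
  have hf₂ : Differentiable ℝ (deriv f) :=
    (contDiff_succ_iff_deriv.mp hf).2.2.differentiable one_ne_zero
  have hlog : deriv (fun t => -log (f t)) =ᶠ[𝓝 x] fun t => -(deriv f t / f t) := by
    filter_upwards [hf₁.continuous.continuousAt.eventually_ne hx] with t ht
    exact ((hf₁ t).hasDerivAt.log ht).neg.deriv
  rw [hlog.deriv_eq, ((hf₂ x).hasDerivAt.fun_div (hf₁ x).hasDerivAt hx).fun_neg.deriv]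
  field_simp
  ring

theorem exp_two_mul_neg_log {a : ℝ} (ha : a ≠ 0) : exp (2 * -log a) = (a ^ 2)⁻¹ := by
  rw [mul_neg, exp_neg, mul_comm, exp_mul, exp_log_eq_abs ha, rpow_two, sq_abs]

theorem neg_log_solves_liouville {D : ℝ → ℝ → ℝ} {x y : ℝ}
    (hx : ContDiff ℝ 2 fun s => D s y) (hy : ContDiff ℝ 2 (D x)) (hD : D x y ≠ 0)
    (h : D x y * (deriv (deriv fun s => D s y) x + deriv (deriv (D x)) y)
      - (deriv (fun s => D s y) x ^ 2 + deriv (D x) y ^ 2) = 1) :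
    deriv (deriv fun s => -log (D s y)) x + deriv (deriv fun t => -log (D x t)) y
      + exp (2 * -log (D x y)) = 0 := by
  rw [deriv_deriv_neg_log hx hD, deriv_deriv_neg_log hy hD, exp_two_mul_neg_log hD]
  field_simp
  linarith

theorem deriv_cosh_mul_add (k a : ℝ) :
    deriv (fun t => cosh (k * t) + a) = fun t => k * sinh (k * t) := by
  funext t; simp [deriv_comp_mul_left]

theorem deriv_const_add_mul_cos_mul (k b c : ℝ) :
    deriv (fun t => b + c * cos (k * t)) = fun t => -(c * k * sin (k * t)) := by
  funext t
  simp only [deriv_const_add', deriv_const_mul_field', deriv_comp_mul_left, deriv_cos', smul_eq_mul]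
  ring

theorem deriv_mul_sinh_mul (k : ℝ) :
    deriv (fun t => k * sinh (k * t)) = fun t => k ^ 2 * cosh (k * t) := by
  funext t
  simp only [deriv_const_mul_field', deriv_comp_mul_left, Real.deriv_sinh, smul_eq_mul]
  ring

theorem deriv_neg_mul_sin_mul (k c : ℝ) :
    deriv (fun t => -(c * k * sin (k * t))) = fun t => -(c * k ^ 2 * cos (k * t)) := by
  funext t
  simp only [deriv.fun_neg', deriv_const_mul_field', deriv_comp_mul_left, Real.deriv_sin,
    smul_eq_mul]
  ring

theorem cats_eyes_liouville_identity (k c x y : ℝ) (hc : k ^ 2 * (1 - c ^ 2) = 1) :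
    (cosh (k * x) + c * cos (k * y)) * (k ^ 2 * cosh (k * x) + -(c * k ^ 2 * cos (k * y)))
      - ((k * sinh (k * x)) ^ 2 + (-(c * k * sin (k * y))) ^ 2) = 1 := by
  linear_combination k ^ 2 * cosh_sq_sub_sinh_sq (k * x) - c ^ 2 * k ^ 2 * sin_sq_add_cos_sq (k * y)
    + hc

theorem cosh_add_mul_cos_pos (a b : ℝ) {c : ℝ} (hc : |c| < 1) : 0 < cosh a + c * cos b := by
  have hcos : |c * cos b| ≤ |c| := by
    rw [abs_mul]; exact mul_le_of_le_one_right (abs_nonneg c) (abs_cos_le_one b)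
  linarith [one_le_cosh a, neg_abs_le (c * cos b)]

/-- Let `k ∈ ℝ` with `|k| > 1` and `κ = √(k² - 1)`. Then
`u(x,y) = -ln( cosh(k·x) + (κ/k)·cos(k·y) )` is a C² solution of the elliptic Liouville
equation `u_xx + u_yy + exp(2u) = 0` on the open set where
`cosh(k·x) + (κ/k)·cos(k·y) > 0` (in particular on all of ℝ² when `k > 1`). -/
theorem cats_eyes_solves_liouville (k : ℝ) (hk : 1 < |k|) :
    let κ : ℝ := Real.sqrt (k ^ 2 - 1)
    let D : ℝ → ℝ → ℝ := fun x y => Real.cosh (k * x) + (κ / k) * Real.cos (k * y)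
    let u : ℝ → ℝ → ℝ := fun x y => -Real.log (D x y)
    (ContDiffOn ℝ 2 (fun p : ℝ × ℝ => u p.1 p.2) {p : ℝ × ℝ | 0 < D p.1 p.2}) ∧
    (∀ x y : ℝ, 0 < D x y →
      deriv (deriv (fun x' : ℝ => u x' y)) x
        + deriv (deriv (fun y' : ℝ => u x y')) y
        + Real.exp (2 * u x y) = 0) ∧
    (1 < k → ∀ x y : ℝ, 0 < D x y) := by
  intro κ D u
  have hk₂ : 1 < k ^ 2 := one_lt_sq_iff_one_lt_abs k |>.mpr hk
  have hk₀ : k ≠ 0 := by rintro rfl; norm_num at hk₂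
  have hκ : κ ^ 2 = k ^ 2 - 1 := sq_sqrt (by linarith)
  have hc : k ^ 2 * (1 - (κ / k) ^ 2) = 1 := by field_simp; linarith
  refine ⟨?_, fun x y hD => ?_, fun hk₁ x y => ?_⟩
  · have hD : ContDiff ℝ 2 fun p : ℝ × ℝ => D p.1 p.2 := by fun_prop
    exact (hD.contDiffOn.log fun p hp => ne_of_gt hp).neg
  · refine neg_log_solves_liouville (by fun_prop) (by fun_prop) hD.ne' ?_
    simp only [D, deriv_cosh_mul_add, deriv_const_add_mul_cos_mul, deriv_mul_sinh_mul,
      deriv_neg_mul_sin_mul]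
    exact cats_eyes_liouville_identity k (κ / k) x y hc
  · have hκk : κ < k := (sqrt_lt' (by linarith)).mpr (by linarith)
    refine cosh_add_mul_cos_pos _ _ ?_
    rw [abs_div, abs_of_pos (by linarith : 0 < k), abs_of_nonneg (sqrt_nonneg _)]
    exact (div_lt_one (by linarith)).mpr hκk
end

section
/- For every real a > 0, the radial function u(x,y) = -ln[ (r/(2a))·( r^a + r^{-a} ) ], where r = √(x² + y²), is a C² solution of the elliptic Liouville equation u_xx + u_yy + exp(2u) = 0 on the punctured plane ℝ² \ {(0,0)}. -/
/-!
Write `s = x² + y²` and `F(s) = s^((1+a)/2) + s^((1-a)/2)`, so that `u = G(s)` with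
`G = log (2a) - log F`. For a function of `s` the Laplacian is `4 (s G')'`, and for a sum of two
powers `F² (s (log F)')' = a²`, because `α - β = a` and `α + β = 1` for the two exponents. Hence
`Δu = -4a² / F² = -exp (2u)`.
-/

open Real Filter Topology

noncomputable def planeLaplacian (u : ℝ → ℝ → ℝ) (x y : ℝ) : ℝ :=
  deriv (deriv fun x' => u x' y) x + deriv (deriv fun y' => u x y') y

theorem hasDerivAt_sq_add (c x : ℝ) : HasDerivAt (fun t : ℝ => t ^ 2 + c) (2 * x) x := by
  simpa using (hasDerivAt_pow 2 x).add_const c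

theorem deriv_deriv_comp_sq_add {g : ℝ → ℝ} {c x : ℝ} (hg : ContDiffAt ℝ 2 g (x ^ 2 + c)) :
    deriv (deriv fun t => g (t ^ 2 + c)) x =
      4 * x ^ 2 * deriv (deriv g) (x ^ 2 + c) + 2 * deriv g (x ^ 2 + c) := by
  have hcont : Tendsto (fun t : ℝ => t ^ 2 + c) (𝓝 x) (𝓝 (x ^ 2 + c)) :=
    (continuous_pow 2 |>.add continuous_const).tendsto x
  have hderiv :
      deriv (fun t => g (t ^ 2 + c)) =ᶠ[𝓝 x] fun t => deriv g (t ^ 2 + c) * (2 * t) := by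
    filter_upwards [hcont.eventually (hg.eventually (by simp))] with t ht
    exact ((ht.differentiableAt two_ne_zero).hasDerivAt.comp t (hasDerivAt_sq_add c t)).deriv
  have hg' : HasDerivAt (deriv g) (deriv (deriv g) (x ^ 2 + c)) (x ^ 2 + c) :=
    ((hg.derivWithin (m := 1) (by norm_num)).differentiableAt one_ne_zero).hasDerivAt
  rw [((hg'.comp x (hasDerivAt_sq_add c x)).mul ((hasDerivAt_id x).const_mul 2)
    |>.congr_of_eventuallyEq hderiv).deriv, Function.comp_apply, id]
  ring

theorem planeLaplacian_comp_sq_add_sq {g : ℝ → ℝ} {x y : ℝ}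
    (hg : ContDiffAt ℝ 2 g (x ^ 2 + y ^ 2)) :
    planeLaplacian (fun u v => g (u ^ 2 + v ^ 2)) x y =
      4 * (x ^ 2 + y ^ 2) * deriv (deriv g) (x ^ 2 + y ^ 2) + 4 * deriv g (x ^ 2 + y ^ 2) := by
  have hx := deriv_deriv_comp_sq_add hg
  rw [add_comm] at hg
  have hy := deriv_deriv_comp_sq_add hg
  simp only [add_comm (y ^ 2)] at hy
  simp only [planeLaplacian, add_comm (x ^ 2)] at hx hy ⊢
  rw [hx, hy]
  ring

noncomputable def rpowComb (c d α β s : ℝ) : ℝ := c * s ^ α + d * s ^ β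

section RpowComb

variable {c d α β s : ℝ}

theorem rpowComb_pos (hc : 0 < c) (hd : 0 < d) (hs : 0 < s) : 0 < rpowComb c d α β s := by
  unfold rpowComb; positivity

theorem hasDerivAt_rpowComb (hs : 0 < s) :
    HasDerivAt (rpowComb c d α β) (rpowComb (c * α) (d * β) (α - 1) (β - 1) s) s := by
  unfold rpowComb
  exact (((hasDerivAt_rpow_const (Or.inl hs.ne')).const_mul c).add
    ((hasDerivAt_rpow_const (Or.inl hs.ne')).const_mul d)).congr_deriv (by ring)

theorem contDiffAt_rpowComb {n : WithTop ℕ∞} (hs : s ≠ 0) :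
    ContDiffAt ℝ n (rpowComb c d α β) s :=
  (contDiffAt_const.mul (contDiffAt_rpow_const_of_ne hs)).add
    (contDiffAt_const.mul (contDiffAt_rpow_const_of_ne hs))

/-- `F² · (s · (log F)')' = c d (α - β)² s^(α + β - 1)` for `F = rpowComb c d α β`. -/
theorem rpowComb_euler_log_deriv (hs : 0 < s) :
    s * (rpowComb c d α β s *
          rpowComb (c * α * (α - 1)) (d * β * (β - 1)) (α - 1 - 1) (β - 1 - 1) s
        - rpowComb (c * α) (d * β) (α - 1) (β - 1) s ^ 2)
      + rpowComb c d α β s * rpowComb (c * α) (d * β) (α - 1) (β - 1) s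
      = c * d * (α - β) ^ 2 * s ^ (α + β - 1) := by
  simp only [rpowComb, rpow_sub_one hs.ne', rpow_add hs]
  field_simp
  ring

end RpowComb

noncomputable def liouvilleProfile (a s : ℝ) : ℝ := -log (√s / (2 * a) * (√s ^ a + √s ^ (-a)))

section LiouvilleProfile

variable {a s : ℝ}

theorem liouvilleProfile_eq_log_sub_log (ha : a ≠ 0) (hs : 0 < s) :
    liouvilleProfile a s = log (2 * a) - log (rpowComb 1 1 ((1 + a) / 2) ((1 - a) / 2) s) := by
  have hF : √s / (2 * a) * (√s ^ a + √s ^ (-a)) =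
      rpowComb 1 1 ((1 + a) / 2) ((1 - a) / 2) s / (2 * a) := by
    rw [sqrt_eq_rpow, ← rpow_mul hs.le, ← rpow_mul hs.le, div_mul_eq_mul_div, mul_add,
      ← rpow_add hs, ← rpow_add hs, rpowComb]
    ring_nf
  rw [liouvilleProfile, hF, log_div (rpowComb_pos one_pos one_pos hs).ne' (by simpa using ha)]
  ring

theorem liouvilleProfile_eventuallyEq (ha : a ≠ 0) (hs : 0 < s) :
    liouvilleProfile a =ᶠ[𝓝 s]
      fun t => log (2 * a) - log (rpowComb 1 1 ((1 + a) / 2) ((1 - a) / 2) t) := by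
  filter_upwards [Ioi_mem_nhds hs] with t ht using liouvilleProfile_eq_log_sub_log ha ht

theorem contDiffOn_liouvilleProfile {n : WithTop ℕ∞} (ha : a ≠ 0) :
    ContDiffOn ℝ n (liouvilleProfile a) (Set.Ioi 0) := fun s (hs : 0 < s) =>
  (contDiffAt_const.sub ((contDiffAt_rpowComb hs.ne').log (rpowComb_pos one_pos one_pos hs).ne')
    |>.congr_of_eventuallyEq (liouvilleProfile_eventuallyEq ha hs)).contDiffWithinAt

theorem exp_two_mul_liouvilleProfile (ha : a ≠ 0) (hs : 0 < s) :
    exp (2 * liouvilleProfile a s) =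
      (2 * a) ^ 2 / rpowComb 1 1 ((1 + a) / 2) ((1 - a) / 2) s ^ 2 := by
  have hF := rpowComb_pos one_pos one_pos (α := (1 + a) / 2) (β := (1 - a) / 2) hs
  have exp_two_mul_log {x : ℝ} (hx : x ≠ 0) : exp (2 * log x) = x ^ 2 := by
    rw [two_mul, exp_add, exp_log_eq_abs hx, abs_mul_abs_self, sq]
  rw [liouvilleProfile_eq_log_sub_log ha hs, mul_sub, exp_sub, exp_two_mul_log (by simpa using ha),
    exp_two_mul_log hF.ne']

theorem liouvilleProfile_ode (ha : a ≠ 0) (hs : 0 < s) :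
    4 * s * deriv (deriv (liouvilleProfile a)) s + 4 * deriv (liouvilleProfile a) s
      + exp (2 * liouvilleProfile a s) = 0 := by
  have hG : ∀ t, 0 < t → HasDerivAt (liouvilleProfile a)
      (-(rpowComb (1 * ((1 + a) / 2)) (1 * ((1 - a) / 2)) ((1 + a) / 2 - 1) ((1 - a) / 2 - 1) t
        / rpowComb 1 1 ((1 + a) / 2) ((1 - a) / 2) t)) t := fun t ht =>
    ((hasDerivAt_rpowComb ht).log (rpowComb_pos one_pos one_pos ht).ne').const_sub (log (2 * a))
      |>.congr_of_eventuallyEq (liouvilleProfile_eventuallyEq ha ht)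
  have hG' := eventuallyEq_of_mem (Ioi_mem_nhds hs) fun t (ht : 0 < t) => (hG t ht).deriv
  have hF := rpowComb_pos one_pos one_pos (α := (1 + a) / 2) (β := (1 - a) / 2) hs
  rw [(((hasDerivAt_rpowComb hs).div (hasDerivAt_rpowComb hs) hF.ne').neg
    |>.congr_of_eventuallyEq hG').deriv, (hG s hs).deriv, exp_two_mul_liouvilleProfile ha hs]
  have hW := rpowComb_euler_log_deriv (c := 1) (d := 1) (α := (1 + a) / 2) (β := (1 - a) / 2) hs
  rw [show (1 + a) / 2 + (1 - a) / 2 - 1 = 0 by ring, rpow_zero] at hW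
  generalize rpowComb 1 1 ((1 + a) / 2) ((1 - a) / 2) s = F at hF hW ⊢
  generalize rpowComb (1 * ((1 + a) / 2)) (1 * ((1 - a) / 2)) ((1 + a) / 2 - 1) ((1 - a) / 2 - 1) s
    = F' at hW ⊢
  generalize rpowComb _ _ ((1 + a) / 2 - 1 - 1) ((1 - a) / 2 - 1 - 1) s = F'' at hW ⊢
  field_simp
  linear_combination (-4) * hW

end LiouvilleProfile

theorem sq_add_sq_pos_of_ne_zero {x y : ℝ} (h : (x, y) ≠ (0, 0)) : 0 < x ^ 2 + y ^ 2 := by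
  by_contra! hle
  exact h (Prod.ext (pow_eq_zero_iff two_ne_zero |>.mp (by nlinarith [sq_nonneg x, sq_nonneg y]))
    (pow_eq_zero_iff two_ne_zero |>.mp (by nlinarith [sq_nonneg x, sq_nonneg y])))

/-- For every real `a > 0`, the radial function
`u(x,y) = -ln[ (r/(2a))·( r^a + r^{-a} ) ]`, `r = √(x² + y²)`, is a C² solution of the
elliptic Liouville equation `u_xx + u_yy + exp(2u) = 0` on the punctured plane ℝ² \ {0}. -/
theorem radial_solves_liouville (a : ℝ) (ha : 0 < a) :
    let u : ℝ → ℝ → ℝ := fun x y =>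
      -Real.log (Real.sqrt (x ^ 2 + y ^ 2) / (2 * a) *
        (Real.sqrt (x ^ 2 + y ^ 2) ^ a + Real.sqrt (x ^ 2 + y ^ 2) ^ (-a)))
    (ContDiffOn ℝ 2 (fun p : ℝ × ℝ => u p.1 p.2) {p : ℝ × ℝ | p ≠ (0, 0)}) ∧
    (∀ x y : ℝ, (x, y) ≠ ((0 : ℝ), (0 : ℝ)) →
      deriv (deriv (fun x' : ℝ => u x' y)) x
        + deriv (deriv (fun y' : ℝ => u x y')) y
        + Real.exp (2 * u x y) = 0) := by
  intro u
  have hG := contDiffOn_liouvilleProfile (n := 2) ha.ne'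
  refine ⟨?_, fun x y hxy => ?_⟩
  · exact hG.comp (by fun_prop : ContDiff ℝ 2 fun p : ℝ × ℝ => p.1 ^ 2 + p.2 ^ 2).contDiffOn
      fun p hp => sq_add_sq_pos_of_ne_zero hp
  · have hs := sq_add_sq_pos_of_ne_zero hxy
    change planeLaplacian (fun x y => liouvilleProfile a (x ^ 2 + y ^ 2)) x y
      + exp (2 * liouvilleProfile a (x ^ 2 + y ^ 2)) = 0
    rw [planeLaplacian_comp_sq_add_sq (hG.contDiffAt (Ioi_mem_nhds hs))]
    exact liouvilleProfile_ode ha.ne' hs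
end

section
/- For every k ∈ ℝ with k ≠ 0 and every (x₀, y₀) ∈ ℝ², the Bennet pinch function u(x,y) = ln( 2|k| / (k² + (x-x₀)² + (y-y₀)²) ) is a C² solution of the elliptic Liouville equation u_xx + u_yy + exp(2u) = 0 on all of ℝ², and it satisfies the normalization condition ∫_{ℝ²} exp(2u(x,y)) dx dy < ∞. -/
open MeasureTheory

lemma bennet_aux (c m t₀ : ℝ) (hc : 0 < c) (hm : 0 < m) (t : ℝ) :
    deriv (deriv (fun s : ℝ => Real.log (c / (m + (s - t₀) ^ 2)))) t
      = (4 * (t - t₀) ^ 2 - 2 * (m + (t - t₀) ^ 2)) / (m + (t - t₀) ^ 2) ^ 2 := by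
  have hfun : (fun s : ℝ => Real.log (c / (m + (s - t₀) ^ 2)))
      = fun s => Real.log c - Real.log (m + (s - t₀) ^ 2) := by
    funext s
    exact Real.log_div hc.ne' (by positivity)
  have hden : ∀ s : ℝ, HasDerivAt (fun s : ℝ => m + (s - t₀) ^ 2) (2 * (s - t₀)) s := by
    intro s
    have h := (((hasDerivAt_id s).sub_const t₀).pow 2).const_add m
    simpa using h
  have h1 : ∀ s : ℝ, HasDerivAt (fun s : ℝ => Real.log (c / (m + (s - t₀) ^ 2)))
      (-(2 * (s - t₀)) / (m + (s - t₀) ^ 2)) s := by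
    intro s
    have hpos : (0:ℝ) < m + (s - t₀) ^ 2 := by positivity
    have hlog : HasDerivAt (fun s : ℝ => Real.log (m + (s - t₀) ^ 2))
        ((m + (s - t₀) ^ 2)⁻¹ * (2 * (s - t₀))) s := by
      have := (Real.hasDerivAt_log hpos.ne').comp s (hden s); exact this
    have := (hasDerivAt_const s (Real.log c)).sub hlog
    rw [hfun]
    exact this.congr_deriv (by ring)
  have hd1 : deriv (fun s : ℝ => Real.log (c / (m + (s - t₀) ^ 2)))
      = fun s => -(2 * (s - t₀)) / (m + (s - t₀) ^ 2) := funext fun s => (h1 s).deriv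
  rw [hd1]
  have hpos : (0:ℝ) < m + (t - t₀) ^ 2 := by positivity
  have hnum : HasDerivAt (fun s : ℝ => -(2 * (s - t₀))) (-2) t := by
    exact (((hasDerivAt_id t).sub_const t₀).const_mul (2:ℝ)).neg.congr_deriv (by simp)
  have h2 := hnum.div (hden t) hpos.ne'
  rw [show (fun s : ℝ => -(2 * (s - t₀)) / (m + (s - t₀) ^ 2))
    = ((fun s : ℝ => -(2 * (s - t₀))) / fun s => m + (s - t₀) ^ 2) from rfl, h2.deriv]
  ring

lemma bennet_int (k : ℝ) (hk : k ≠ 0) :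
    Integrable (fun q : ℝ × ℝ => 4 * k ^ 2 / (k ^ 2 + q.1 ^ 2 + q.2 ^ 2) ^ 2) := by
  set m : ℝ := min (k ^ 2) 1 with hm
  have hm0 : 0 < m := lt_min (by positivity) one_pos
  have hfin : ((Module.finrank ℝ (ℝ × ℝ) : ℝ)) < 4 := by
    simp [Module.finrank_prod]
    norm_num
  have hmaj : Integrable (fun q : ℝ × ℝ =>
      (4 * k ^ 2 / m ^ 2) * ((1 + ‖q‖ ^ 2) ^ 2)⁻¹) := by
    have h := (integrable_rpow_neg_one_add_norm_sq (E := ℝ × ℝ) (μ := volume)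
      (r := 4) hfin).const_mul (4 * k ^ 2 / m ^ 2)
    refine h.congr (Filter.Eventually.of_forall fun q => ?_)
    have he : ((1:ℝ) + ‖q‖ ^ 2) ^ ((-4 : ℝ) / 2) = (((1:ℝ) + ‖q‖ ^ 2) ^ 2)⁻¹ := by
      rw [show (-4 : ℝ) / 2 = -((2:ℕ):ℝ) by norm_num,
        Real.rpow_neg (by positivity : (0:ℝ) ≤ 1 + ‖q‖ ^ 2), Real.rpow_natCast]
    simp only [he]
  refine hmaj.mono' ?_ (Filter.Eventually.of_forall fun q => ?_)
  · refine (Continuous.div continuous_const (by fun_prop) fun q => ?_).aestronglyMeasurable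
    positivity
  · have hn : ‖q‖ ^ 2 ≤ q.1 ^ 2 + q.2 ^ 2 := by
      rw [Prod.norm_def, Real.norm_eq_abs, Real.norm_eq_abs]
      rcases max_choice |q.1| |q.2| with h | h <;> rw [h, sq_abs] <;>
        nlinarith [sq_nonneg q.1, sq_nonneg q.2]
    have h1 : m * (1 + ‖q‖ ^ 2) ≤ k ^ 2 + q.1 ^ 2 + q.2 ^ 2 := by
      have hm1 : m ≤ k ^ 2 := min_le_left _ _
      have hm2 : m ≤ 1 := min_le_right _ _
      nlinarith [sq_nonneg ‖q‖]
    have hpos : (0:ℝ) < k ^ 2 + q.1 ^ 2 + q.2 ^ 2 := by positivity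
    have hpos2 : (0:ℝ) < m * (1 + ‖q‖ ^ 2) := by positivity
    rw [Real.norm_eq_abs, abs_of_nonneg (by positivity)]
    calc 4 * k ^ 2 / (k ^ 2 + q.1 ^ 2 + q.2 ^ 2) ^ 2
        ≤ 4 * k ^ 2 / (m * (1 + ‖q‖ ^ 2)) ^ 2 := by
          gcongr
      _ = (4 * k ^ 2 / m ^ 2) * ((1 + ‖q‖ ^ 2) ^ 2)⁻¹ := by
          have : (1 + ‖q‖ ^ 2) ≠ 0 := by positivity
          field_simp

/-- For every `k ≠ 0` and `(x₀, y₀) ∈ ℝ²`, the Bennet pinch function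
`u(x,y) = ln( 2|k| / (k² + (x-x₀)² + (y-y₀)²) )` is a C² solution of the elliptic
Liouville equation `u_xx + u_yy + exp(2u) = 0` on all of ℝ², and it satisfies the
normalization condition `∫_{ℝ²} exp(2u) dx dy < ∞`. -/
theorem bennet_pinch_solves_liouville (k x₀ y₀ : ℝ) (hk : k ≠ 0) :
    let u : ℝ → ℝ → ℝ := fun x y =>
      Real.log (2 * |k| / (k ^ 2 + (x - x₀) ^ 2 + (y - y₀) ^ 2))
    (ContDiff ℝ 2 (fun p : ℝ × ℝ => u p.1 p.2)) ∧
    (∀ x y : ℝ,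
      deriv (deriv (fun x' : ℝ => u x' y)) x
        + deriv (deriv (fun y' : ℝ => u x y')) y
        + Real.exp (2 * u x y) = 0) ∧
    Integrable (fun p : ℝ × ℝ => Real.exp (2 * u p.1 p.2)) := by
  intro u
  have hc0 : (0:ℝ) < 2 * |k| := by positivity
  have hD : ∀ x y : ℝ, (0:ℝ) < k ^ 2 + (x - x₀) ^ 2 + (y - y₀) ^ 2 := by
    intro x y; positivity
  have hexp : ∀ x y : ℝ, Real.exp (2 * u x y)
      = 4 * k ^ 2 / (k ^ 2 + (x - x₀) ^ 2 + (y - y₀) ^ 2) ^ 2 := by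
    intro x y
    have h2 : (2:ℝ) * u x y
        = Real.log ((2 * |k| / (k ^ 2 + (x - x₀) ^ 2 + (y - y₀) ^ 2)) ^ 2) := by
      rw [Real.log_pow]; push_cast; ring
    rw [h2, Real.exp_log (by positivity), div_pow, mul_pow, sq_abs]
    norm_num
  refine ⟨?_, ?_, ?_⟩
  · have hDc : ContDiff ℝ 2 (fun p : ℝ × ℝ =>
        k ^ 2 + (p.1 - x₀) ^ 2 + (p.2 - y₀) ^ 2) := by fun_prop
    have hq : ContDiff ℝ 2 (fun p : ℝ × ℝ =>
        2 * |k| / (k ^ 2 + (p.1 - x₀) ^ 2 + (p.2 - y₀) ^ 2)) :=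
      contDiff_const.div hDc fun p => (hD p.1 p.2).ne'
    exact hq.log fun p => by positivity
  · intro x y
    have hx : (fun x' : ℝ => u x' y)
        = fun x' => Real.log (2 * |k| / ((k ^ 2 + (y - y₀) ^ 2) + (x' - x₀) ^ 2)) := by
      funext x'
      simp only [u]
      rw [show k ^ 2 + (x' - x₀) ^ 2 + (y - y₀) ^ 2
        = (k ^ 2 + (y - y₀) ^ 2) + (x' - x₀) ^ 2 from by ring]
    have hy : (fun y' : ℝ => u x y')
        = fun y' => Real.log (2 * |k| / ((k ^ 2 + (x - x₀) ^ 2) + (y' - y₀) ^ 2)) := by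
      funext y'
      simp only [u]
    rw [hx, hy, bennet_aux _ _ _ hc0 (by positivity), bennet_aux _ _ _ hc0 (by positivity),
      hexp]
    have e1 : (k ^ 2 + (y - y₀) ^ 2) + (x - x₀) ^ 2
        = k ^ 2 + (x - x₀) ^ 2 + (y - y₀) ^ 2 := by ring
    have e2 : (k ^ 2 + (x - x₀) ^ 2) + (y - y₀) ^ 2
        = k ^ 2 + (x - x₀) ^ 2 + (y - y₀) ^ 2 := by ring
    rw [e1, e2]
    field_simp
    ring
  · have hfun : (fun p : ℝ × ℝ => Real.exp (2 * u p.1 p.2))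
        = fun p : ℝ × ℝ => 4 * k ^ 2
            / (k ^ 2 + ((p - (x₀, y₀)).1) ^ 2 + ((p - (x₀, y₀)).2) ^ 2) ^ 2 := by
      funext p
      rw [hexp p.1 p.2]
      simp
    rw [hfun]
    exact (bennet_int k hk).comp_sub_right ((x₀, y₀) : ℝ × ℝ)
end

section
/- For every λ ∈ ℝ, the function u(x,y) = -ln[ (1 - 2λx + λ²r²)·cosh( (x - λr²) / (1 - 2λx + λ²r²) ) ], where r² = x² + y², is a C² solution of the elliptic Liouville equation u_xx + u_yy + exp(2u) = 0 on the open set where 1 - 2λx + λ²r² > 0. (For λ = 0 this reduces to the Harris sheet solution u = -ln cosh x.) -/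
/-!
The map `f(z) = z / (1 - λz)` is the time-`λ` flow of the holomorphic vector field `z² ∂_z`,
and the deformed sheet is the Harris profile `h(t) = -log cosh t` transported by it:
`u = h(Re f) + log |f'|`, where `|f'(z)| = 1 / |1 - λz|² = 1 / D`. As `Re f` is harmonic
with `|∇ Re f|² = |f'|²`, the Laplacian of `h(Re f)` is `h''(Re f) |f'|²`, while `log D` is
harmonic. Hence `Δu + e^{2u} = |f'|² (h'' + e^{2h})(Re f) = 0` by the one-dimensional
equation for `h`.
-/

open Filter Topology
open Complex (I normSq)

def HasSecondDerivAt (f f' : ℝ → ℝ) (f'' t : ℝ) : Prop :=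
  (∀ᶠ s in 𝓝 t, HasDerivAt f (f' s) s) ∧ HasDerivAt f' f'' t

namespace HasSecondDerivAt

variable {f g f' g' : ℝ → ℝ} {f'' g'' t : ℝ}

theorem deriv_deriv (hf : HasSecondDerivAt f f' f'' t) : deriv (deriv f) t = f'' := by
  have hderiv : deriv f =ᶠ[𝓝 t] f' := hf.1.mono fun s hs => hs.deriv
  rw [hderiv.deriv_eq, hf.2.deriv]

theorem sub (hf : HasSecondDerivAt f f' f'' t) (hg : HasSecondDerivAt g g' g'' t) :
    HasSecondDerivAt (fun s => f s - g s) (fun s => f' s - g' s) (f'' - g'') t :=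
  ⟨(hf.1.and hg.1).mono fun _ hs => hs.1.sub hs.2, hf.2.sub hg.2⟩

theorem congr_of_eventuallyEq (hf : HasSecondDerivAt f f' f'' t) (hg : g =ᶠ[𝓝 t] f) :
    HasSecondDerivAt g f' f'' t :=
  ⟨(hg.eventuallyEq_nhds.and hf.1).mono fun _ hs => hs.2.congr_of_eventuallyEq hs.1, hf.2⟩

theorem comp {φ φ' : ℝ → ℝ} {φ'' : ℝ} (hφ : HasSecondDerivAt φ φ' φ'' (g t))
    (hg : HasSecondDerivAt g g' g'' t) :
    HasSecondDerivAt (fun s => φ (g s)) (fun s => φ' (g s) * g' s)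
      (φ'' * g' t ^ 2 + φ' (g t) * g'') t := by
  have hg_cont : ContinuousAt g t := hg.1.self_of_nhds.continuousAt
  refine ⟨(hg_cont.eventually hφ.1 |>.and hg.1).mono fun s hs => hs.1.comp s hs.2, ?_⟩
  exact ((hφ.2.comp t hg.1.self_of_nhds).mul hg.2).congr_deriv
    (by simp only [Function.comp]; ring)

end HasSecondDerivAt

theorem hasSecondDerivAt_re_comp {F F' : ℂ → ℂ} {F'' v : ℂ} {ℓ : ℝ → ℂ} {t : ℝ}
    (hF : ∀ᶠ ζ in 𝓝 (ℓ t), HasDerivAt F (F' ζ) ζ) (hF' : HasDerivAt F' F'' (ℓ t))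
    (hℓ : ∀ s, HasDerivAt ℓ v s) :
    HasSecondDerivAt (fun s => (F (ℓ s)).re) (fun s => (F' (ℓ s) * v).re)
      (F'' * v ^ 2).re t := by
  have hℓ_cont : ContinuousAt ℓ t := (hℓ t).continuousAt
  refine ⟨(hℓ_cont.eventually hF).mono fun s hs =>
    Complex.reCLM.hasFDerivAt.comp_hasDerivAt s (hs.comp s (hℓ s)), ?_⟩
  exact (Complex.reCLM.hasFDerivAt.comp_hasDerivAt t
    ((hF'.comp t (hℓ t)).mul_const v)).congr_deriv (by simp [sq, mul_assoc])

theorem hasSecondDerivAt_log {r : ℝ} (hr : 0 < r) :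
    HasSecondDerivAt Real.log (fun r => r⁻¹) (-(r ^ 2)⁻¹) r :=
  ⟨(lt_mem_nhds hr).mono fun _ hs => Real.hasDerivAt_log hs.ne', hasDerivAt_inv hr.ne'⟩

noncomputable def harrisProfile (t : ℝ) : ℝ := -Real.log (Real.cosh t)

theorem hasSecondDerivAt_harrisProfile (t : ℝ) :
    HasSecondDerivAt harrisProfile (fun t => -(Real.sinh t / Real.cosh t))
      (-(Real.cosh t ^ 2)⁻¹) t := by
  refine ⟨Eventually.of_forall fun s => ?_, ?_⟩
  · exact ((Real.hasDerivAt_cosh s).log (Real.cosh_pos s).ne').neg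
  · refine ((Real.hasDerivAt_sinh t).div (Real.hasDerivAt_cosh t)
      (Real.cosh_pos t).ne').neg.congr_deriv ?_
    rw [← sq, ← sq, Real.cosh_sq_sub_sinh_sq, one_div]

theorem exp_two_mul_harrisProfile (t : ℝ) :
    Real.exp (2 * harrisProfile t) = (Real.cosh t ^ 2)⁻¹ := by
  rw [harrisProfile, mul_neg, Real.exp_neg, two_mul, Real.exp_add,
    Real.exp_log (Real.cosh_pos t), sq]

noncomputable def moebius (lam : ℝ) (ζ : ℂ) : ℂ := ζ / (1 - lam * ζ)

theorem hasDerivAt_moebius {lam : ℝ} {ζ : ℂ} (hζ : 1 - lam * ζ ≠ 0) :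
    HasDerivAt (moebius lam) (((1 - lam * ζ) ^ 2)⁻¹) ζ := by
  refine ((hasDerivAt_id' ζ).div (((hasDerivAt_id' ζ).const_mul (lam : ℂ)).const_sub 1)
    hζ).congr_deriv ?_
  field_simp
  ring

theorem hasDerivAt_inv_one_sub_mul_sq {lam : ℝ} {ζ : ℂ} (hζ : 1 - lam * ζ ≠ 0) :
    HasDerivAt (fun ζ : ℂ => ((1 - lam * ζ) ^ 2)⁻¹)
      (2 * lam * ((1 - lam * ζ) ^ 3)⁻¹ : ℂ) ζ := by
  refine ((((hasDerivAt_id' ζ).const_mul (lam : ℂ)).const_sub 1).fun_pow 2).inv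
    (pow_ne_zero 2 hζ) |>.congr_deriv ?_
  field_simp
  ring

def moebiusDenom (lam x y : ℝ) : ℝ := 1 - 2 * lam * x + lam ^ 2 * (x ^ 2 + y ^ 2)

theorem normSq_one_sub_mul (lam x y : ℝ) :
    normSq (1 - lam * (x + y * I)) = moebiusDenom lam x y := by
  simp [Complex.normSq_apply, moebiusDenom]
  ring

theorem moebius_re (lam x y : ℝ) :
    (moebius lam (x + y * I)).re = (x - lam * (x ^ 2 + y ^ 2)) / moebiusDenom lam x y := by
  rw [moebius, Complex.div_re, normSq_one_sub_mul]
  simp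
  ring

theorem hasSecondDerivAt_moebiusDenom_left (lam x y : ℝ) :
    HasSecondDerivAt (fun s => moebiusDenom lam s y) (fun s => 2 * lam * (lam * s - 1))
      (2 * lam ^ 2) x := by
  refine ⟨Eventually.of_forall fun s => ?_, ?_⟩
  · exact (((hasDerivAt_id' s).const_mul (2 * lam)).const_sub 1 |>.add
      ((((hasDerivAt_id' s).pow 2).add_const (y ^ 2)).const_mul (lam ^ 2))).congr_deriv
      (by simp; ring)
  · refine ((((hasDerivAt_id' x).const_mul lam).sub_const 1).const_mul (2 * lam)).congr_deriv ?_
    ring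

theorem hasSecondDerivAt_moebiusDenom_right (lam x y : ℝ) :
    HasSecondDerivAt (fun s => moebiusDenom lam x s) (fun s => 2 * lam ^ 2 * s)
      (2 * lam ^ 2) y := by
  refine ⟨Eventually.of_forall fun s => ?_, ?_⟩
  · exact ((((hasDerivAt_id' s).pow 2).const_add (x ^ 2)).const_mul (lam ^ 2)
      |>.const_add (1 - 2 * lam * x)).congr_deriv (by simp; ring)
  · exact ((hasDerivAt_id' y).const_mul (2 * lam ^ 2)).congr_deriv (by simp)

section Lines

variable {h h' : ℝ → ℝ} {h'' : ℝ} {F F' : ℂ → ℂ} {F'' : ℂ} {x y : ℝ}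

theorem hasSecondDerivAt_comp_re_horizontal (hh : HasSecondDerivAt h h' h'' (F (x + y * I)).re)
    (hF : ∀ᶠ ζ in 𝓝 (x + y * I : ℂ), HasDerivAt F (F' ζ) ζ)
    (hF' : HasDerivAt F' F'' (x + y * I)) :
    HasSecondDerivAt (fun s => h (F (s + y * I)).re)
      (fun s => h' (F (s + y * I)).re * (F' (s + y * I)).re)
      (h'' * (F' (x + y * I)).re ^ 2 + h' (F (x + y * I)).re * F''.re) x := by
  have hline (s : ℝ) : HasDerivAt (fun s : ℝ => (s : ℂ) + y * I) 1 s :=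
    (hasDerivAt_id' s).ofReal_comp.add_const _ |>.congr_deriv Complex.ofReal_one
  simpa using
    hh.comp (hasSecondDerivAt_re_comp (ℓ := fun s : ℝ => (s : ℂ) + y * I) hF hF' hline)

theorem hasSecondDerivAt_comp_re_vertical (hh : HasSecondDerivAt h h' h'' (F (x + y * I)).re)
    (hF : ∀ᶠ ζ in 𝓝 (x + y * I : ℂ), HasDerivAt F (F' ζ) ζ)
    (hF' : HasDerivAt F' F'' (x + y * I)) :
    HasSecondDerivAt (fun s => h (F (x + s * I)).re)
      (fun s => -(h' (F (x + s * I)).re * (F' (x + s * I)).im))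
      (h'' * (F' (x + y * I)).im ^ 2 - h' (F (x + y * I)).re * F''.re) y := by
  have hline (s : ℝ) : HasDerivAt (fun s : ℝ => (x : ℂ) + s * I) I s :=
    ((hasDerivAt_id' s).ofReal_comp.mul_const I).const_add _ |>.congr_deriv (by simp)
  simpa [sub_eq_add_neg] using
    hh.comp (hasSecondDerivAt_re_comp (ℓ := fun s : ℝ => (x : ℂ) + s * I) hF hF' hline)

end Lines

noncomputable def deformedHarris (lam x y : ℝ) : ℝ :=
  -Real.log (moebiusDenom lam x y *
    Real.cosh ((x - lam * (x ^ 2 + y ^ 2)) / moebiusDenom lam x y))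

theorem deformedHarris_eq {lam x y : ℝ} (hD : moebiusDenom lam x y ≠ 0) :
    deformedHarris lam x y =
      harrisProfile (moebius lam (x + y * I)).re - Real.log (moebiusDenom lam x y) := by
  rw [deformedHarris, moebius_re, Real.log_mul hD (Real.cosh_pos _).ne', harrisProfile]
  ring

theorem exp_two_mul_deformedHarris {lam x y : ℝ} (hD : 0 < moebiusDenom lam x y) :
    Real.exp (2 * deformedHarris lam x y) =
      (Real.cosh (moebius lam (x + y * I)).re ^ 2)⁻¹ * (moebiusDenom lam x y ^ 2)⁻¹ := by
  rw [deformedHarris_eq hD.ne', mul_sub, Real.exp_sub, exp_two_mul_harrisProfile,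
    ← Real.log_rpow hD, Real.exp_log (by positivity), div_eq_mul_inv, Real.rpow_two]

theorem re_sq_add_im_sq_inv_one_sub_mul_sq (lam x y : ℝ) :
    (((1 - lam * (x + y * I)) ^ 2)⁻¹ : ℂ).re ^ 2
      + (((1 - lam * (x + y * I)) ^ 2)⁻¹ : ℂ).im ^ 2 = (moebiusDenom lam x y ^ 2)⁻¹ := by
  have h := Complex.normSq_apply ((1 - lam * (x + y * I)) ^ 2)⁻¹
  rw [map_inv₀, map_pow, normSq_one_sub_mul] at h
  rw [h]
  ring

theorem deformedHarris_liouville {lam x y : ℝ} (hD : 0 < moebiusDenom lam x y) :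
    deriv (deriv fun s => deformedHarris lam s y) x
      + deriv (deriv fun s => deformedHarris lam x s) y
      + Real.exp (2 * deformedHarris lam x y) = 0 := by
  have hz : 1 - lam * (x + y * I) ≠ 0 := by
    rw [← Complex.normSq_pos, normSq_one_sub_mul]
    exact hD
  have hF : ∀ᶠ ζ in 𝓝 (x + y * I : ℂ), HasDerivAt (moebius lam) (((1 - lam * ζ) ^ 2)⁻¹) ζ :=
    ((by fun_prop : Continuous fun ζ : ℂ => 1 - lam * ζ).continuousAt.eventually_ne hz).mono
      fun _ hζ => hasDerivAt_moebius hζ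
  have hF' := hasDerivAt_inv_one_sub_mul_sq hz
  have hh := hasSecondDerivAt_harrisProfile (moebius lam (x + y * I)).re
  have hDx := hasSecondDerivAt_moebiusDenom_left lam x y
  have hDy := hasSecondDerivAt_moebiusDenom_right lam x y
  have h_horizontal := ((hasSecondDerivAt_comp_re_horizontal hh hF hF').sub
    ((hasSecondDerivAt_log hD).comp (g := (moebiusDenom lam · y)) hDx)).congr_of_eventuallyEq
    ((hDx.1.self_of_nhds.continuousAt.eventually_ne hD.ne').mono fun _ hs => deformedHarris_eq hs)
  have h_vertical := ((hasSecondDerivAt_comp_re_vertical hh hF hF').sub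
    ((hasSecondDerivAt_log hD).comp hDy)).congr_of_eventuallyEq
    ((hDy.1.self_of_nhds.continuousAt.eventually_ne hD.ne').mono fun _ hs => deformedHarris_eq hs)
  have hlog_harmonic : (moebiusDenom lam x y ^ 2)⁻¹ * ((2 * lam * (lam * x - 1)) ^ 2
      + (2 * lam ^ 2 * y) ^ 2) = 2 * ((moebiusDenom lam x y)⁻¹ * (2 * lam ^ 2)) := by
    have hD_eq : moebiusDenom lam x y = (lam * x - 1) ^ 2 + lam ^ 2 * y ^ 2 := by
      rw [moebiusDenom]; ring
    field_simp
    rw [hD_eq]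
    ring
  rw [h_horizontal.deriv_deriv, h_vertical.deriv_deriv, exp_two_mul_deformedHarris hD]
  linear_combination (-(Real.cosh (moebius lam (x + y * I)).re ^ 2)⁻¹) *
    re_sq_add_im_sq_inv_one_sub_mul_sq lam x y + hlog_harmonic

theorem contDiffOn_deformedHarris (lam : ℝ) {n : WithTop ℕ∞} :
    ContDiffOn ℝ n (fun p : ℝ × ℝ => deformedHarris lam p.1 p.2)
      {p | 0 < moebiusDenom lam p.1 p.2} := by
  have hD : ContDiff ℝ n fun p : ℝ × ℝ => moebiusDenom lam p.1 p.2 := by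
    unfold moebiusDenom; fun_prop
  have hw : ContDiffOn ℝ n (fun p : ℝ × ℝ => (p.1 - lam * (p.1 ^ 2 + p.2 ^ 2)) /
      moebiusDenom lam p.1 p.2) {p | 0 < moebiusDenom lam p.1 p.2} :=
    (by fun_prop : ContDiff ℝ n fun p : ℝ × ℝ => p.1 - lam * (p.1 ^ 2 + p.2 ^ 2)).contDiffOn.div
      hD.contDiffOn fun _ hp => ne_of_gt hp
  exact (hD.contDiffOn.mul (Real.contDiff_cosh.comp_contDiffOn hw)).log
    (fun p hp => (mul_pos hp (Real.cosh_pos _)).ne') |>.neg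

theorem deformedHarris_zero (x y : ℝ) : deformedHarris 0 x y = -Real.log (Real.cosh x) := by
  simp [deformedHarris, moebiusDenom]

/-- For every `λ ∈ ℝ`, the function
`u(x,y) = -ln[ (1 - 2λx + λ²r²)·cosh( (x - λr²) / (1 - 2λx + λ²r²) ) ]`, `r² = x² + y²`,
is a C² solution of the elliptic Liouville equation `u_xx + u_yy + exp(2u) = 0` on the
open set where `1 - 2λx + λ²r² > 0`. For `λ = 0` it reduces to the Harris sheet solution
`u = -ln cosh x`. -/
theorem deformed_harris_solves_liouville (lam : ℝ) :
    let D : ℝ → ℝ → ℝ := fun x y => 1 - 2 * lam * x + lam ^ 2 * (x ^ 2 + y ^ 2)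
    let u : ℝ → ℝ → ℝ := fun x y =>
      -Real.log (D x y * Real.cosh ((x - lam * (x ^ 2 + y ^ 2)) / D x y))
    (ContDiffOn ℝ 2 (fun p : ℝ × ℝ => u p.1 p.2) {p : ℝ × ℝ | 0 < D p.1 p.2}) ∧
    (∀ x y : ℝ, 0 < D x y →
      deriv (deriv (fun x' : ℝ => u x' y)) x
        + deriv (deriv (fun y' : ℝ => u x y')) y
        + Real.exp (2 * u x y) = 0) ∧
    (lam = 0 → ∀ x y : ℝ, u x y = -Real.log (Real.cosh x)) :=
  ⟨contDiffOn_deformedHarris lam, fun _ _ => deformedHarris_liouville,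
    fun hlam => hlam ▸ deformedHarris_zero⟩
end

section
/- Let Ω ⊆ ℂ be open, γ : Ω → ℂ holomorphic with γ'(z) ≠ 0 on Ω, and let u(x,y) = ln( 2|γ'(z)| / (1 + |γ(z)|²) ) with z = x + iy be the associated solution of the elliptic Liouville equation. Define the holomorphic function φ₀(z) = i·γ(z)/γ'(z), so that γ'(z)·φ₀(z) = i·γ(z), and write ξ = Re φ₀, η = Im φ₀. Then u is invariant under the Lie vector field determined by φ₀, i.e. ξ(x,y)·u_x(x,y) + η(x,y)·u_y(x,y) + Re φ₀'(z) = 0 for all z = x + iy ∈ Ω. -/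
open Complex

-- derivative of |g|^2 along a real path
private lemma hasDerivAt_sq_abs {g : ℝ → ℂ} {d : ℂ} {t : ℝ} (hg : HasDerivAt g d t) :
    HasDerivAt (fun s => ‖g s‖ ^ 2)
      (2 * ((starRingEnd ℂ) (g t) * d).re) t := by
  have hre : HasDerivAt (fun s => (g s).re) d.re t :=
    Complex.reCLM.hasFDerivAt.comp_hasDerivAt t hg
  have him : HasDerivAt (fun s => (g s).im) d.im t :=
    Complex.imCLM.hasFDerivAt.comp_hasDerivAt t hg
  have h := (hre.mul hre).add (him.mul him)
  have hfun : (fun s => ‖g s‖ ^ 2)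
      = fun s => (g s).re * (g s).re + (g s).im * (g s).im := by
    funext s; rw [Complex.sq_norm, Complex.normSq_apply]
  rw [hfun]
  refine HasDerivAt.congr_deriv h ?_
  simp [Complex.mul_re]; ring

private lemma hasDerivAt_log_expr {Ω : Set ℂ} (hΩ : IsOpen Ω) {γ : ℂ → ℂ}
    (hγ : DifferentiableOn ℂ γ Ω) {z : ℂ} (hz : z ∈ Ω) (hb : deriv γ z ≠ 0)
    {p : ℝ → ℂ} {t : ℝ} {v : ℂ} (hp : HasDerivAt p v t) (hpt : p t = z) :
    HasDerivAt (fun s => Real.log (2 * ‖deriv γ (p s)‖ /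
        (1 + ‖γ (p s)‖ ^ 2)))
      (((starRingEnd ℂ) (deriv γ z) * (deriv (deriv γ) z * v)).re / ‖deriv γ z‖ ^ 2
        - 2 * ((starRingEnd ℂ) (γ z) * (deriv γ z * v)).re / (1 + ‖γ z‖ ^ 2)) t := by
  have hA : AnalyticOnNhd ℂ γ Ω := hγ.analyticOnNhd hΩ
  have hA' : AnalyticOnNhd ℂ (deriv γ) Ω := hA.deriv
  have hdγ : HasDerivAt γ (deriv γ z) z := (hA z hz).differentiableAt.hasDerivAt
  have hdγ' : HasDerivAt (deriv γ) (deriv (deriv γ) z) z :=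
    (hA' z hz).differentiableAt.hasDerivAt
  -- compositions along the path
  have hg1 : HasDerivAt (fun s => γ (p s)) (deriv γ z * v) t := by
    have h := (hdγ.hasFDerivAt.restrictScalars ℝ).comp_hasDerivAt_of_eq t hp hpt.symm
    refine HasDerivAt.congr_deriv h ?_
    simp [ContinuousLinearMap.toSpanSingleton_apply, mul_comm]
  have hg2 : HasDerivAt (fun s => deriv γ (p s)) (deriv (deriv γ) z * v) t := by
    have h := (hdγ'.hasFDerivAt.restrictScalars ℝ).comp_hasDerivAt_of_eq t hp hpt.symm
    refine HasDerivAt.congr_deriv h ?_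
    simp [ContinuousLinearMap.toSpanSingleton_apply, mul_comm]
  -- squared-modulus derivatives
  have hsq1 : HasDerivAt (fun s => ‖deriv γ (p s)‖ ^ 2)
      (2 * ((starRingEnd ℂ) (deriv γ z) * (deriv (deriv γ) z * v)).re) t := by
    have := hasDerivAt_sq_abs hg2
    rwa [hpt] at this
  have hsq2 : HasDerivAt (fun s => ‖γ (p s)‖ ^ 2)
      (2 * ((starRingEnd ℂ) (γ z) * (deriv γ z * v)).re) t := by
    have := hasDerivAt_sq_abs hg1
    rwa [hpt] at this
  have habsb : ‖deriv γ z‖ ^ 2 ≠ 0 := by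
    simpa using hb
  have hSpos : (0:ℝ) < 1 + ‖γ z‖ ^ 2 := by positivity
  have hlog1 : HasDerivAt (fun s => Real.log (‖deriv γ (p s)‖ ^ 2))
      (2 * ((starRingEnd ℂ) (deriv γ z) * (deriv (deriv γ) z * v)).re /
        (‖deriv γ z‖ ^ 2)) t := by
    have := hsq1.log (by rw [hpt]; exact habsb)
    rwa [hpt] at this
  have hlog2 : HasDerivAt (fun s => Real.log (1 + ‖γ (p s)‖ ^ 2))
      (2 * ((starRingEnd ℂ) (γ z) * (deriv γ z * v)).re /
        (1 + ‖γ z‖ ^ 2)) t := by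
    have h := (hsq2.const_add 1).log (by rw [hpt]; exact ne_of_gt hSpos)
    rwa [hpt] at h
  have hcomb : HasDerivAt (fun s => Real.log 2
        + (1/2) * Real.log (‖deriv γ (p s)‖ ^ 2)
        - Real.log (1 + ‖γ (p s)‖ ^ 2))
      ((1/2) * (2 * ((starRingEnd ℂ) (deriv γ z) * (deriv (deriv γ) z * v)).re /
          (‖deriv γ z‖ ^ 2))
        - 2 * ((starRingEnd ℂ) (γ z) * (deriv γ z * v)).re / (1 + ‖γ z‖ ^ 2)) t := by
    exact ((hlog1.const_mul (1/2:ℝ)).const_add (Real.log 2)).sub hlog2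
  -- the two expressions agree near t
  have hne : ∀ᶠ s in nhds t, deriv γ (p s) ≠ 0 :=
    hg2.continuousAt.eventually_ne (by rw [hpt]; exact hb)
  have hev : (fun s => Real.log (2 * ‖deriv γ (p s)‖ /
        (1 + ‖γ (p s)‖ ^ 2)))
      =ᶠ[nhds t] (fun s => Real.log 2
        + (1/2) * Real.log (‖deriv γ (p s)‖ ^ 2)
        - Real.log (1 + ‖γ (p s)‖ ^ 2)) := by
    filter_upwards [hne] with s hs
    have hA0 : ‖deriv γ (p s)‖ ≠ 0 := by simpa using hs
    have hS0 : (1:ℝ) + ‖γ (p s)‖ ^ 2 ≠ 0 := by positivity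
    rw [Real.log_div (by simpa using hA0) hS0, Real.log_mul two_ne_zero hA0,
      Real.log_pow]
    push_cast
    ring
  have := hcomb.congr_of_eventuallyEq hev
  refine HasDerivAt.congr_deriv this ?_
  ring


set_option maxHeartbeats 1000000 in
private lemma liouville_algebra (a b c : ℂ) (hb : b ≠ 0) :
    (Complex.I * a / b).re *
        (((starRingEnd ℂ) b * (c * 1)).re / ‖b‖ ^ 2
          - 2 * ((starRingEnd ℂ) a * (b * 1)).re / (1 + ‖a‖ ^ 2))
      + (Complex.I * a / b).im *
        (((starRingEnd ℂ) b * (c * Complex.I)).re / ‖b‖ ^ 2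
          - 2 * ((starRingEnd ℂ) a * (b * Complex.I)).re / (1 + ‖a‖ ^ 2))
      + ((Complex.I * b * b - Complex.I * a * c) / b ^ 2).re = 0 := by
  set s : ℝ := ‖a‖ ^ 2 with hs
  have hSpos : (0:ℝ) < 1 + s := by positivity
  have hS : (1:ℝ) + s ≠ 0 := ne_of_gt hSpos
  have hnb : Complex.normSq b ≠ 0 := by simpa [Complex.normSq_eq_zero] using hb
  have hnb' : b.re * b.re + b.im * b.im ≠ 0 := by
    rwa [Complex.normSq_apply] at hnb
  set U : ℂ := c / b - 2 * (starRingEnd ℂ) a * b / (((1+s : ℝ)) : ℂ) with hU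
  have hUre : U.re = ((starRingEnd ℂ) b * (c * 1)).re / ‖b‖ ^ 2
      - 2 * ((starRingEnd ℂ) a * (b * 1)).re / (1 + s) := by
    rw [hU]
    simp only [Complex.sub_re, Complex.div_re, Complex.mul_re, Complex.mul_im,
      Complex.conj_re, Complex.conj_im, Complex.ofReal_re, Complex.ofReal_im,
      Complex.normSq_apply, Complex.sq_norm, Complex.one_re, Complex.one_im, Complex.re_ofNat, Complex.im_ofNat]
    field_simp
    ring
  have hUim : -U.im = ((starRingEnd ℂ) b * (c * Complex.I)).re / ‖b‖ ^ 2
      - 2 * ((starRingEnd ℂ) a * (b * Complex.I)).re / (1 + s) := by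
    rw [hU]
    simp only [Complex.sub_im, Complex.div_im, Complex.mul_re, Complex.mul_im,
      Complex.conj_re, Complex.conj_im, Complex.ofReal_re, Complex.ofReal_im,
      Complex.normSq_apply, Complex.sq_norm, Complex.I_re, Complex.I_im, Complex.re_ofNat, Complex.im_ofNat]
    field_simp
    ring
  have hconj : a * (starRingEnd ℂ) a = ((s : ℝ) : ℂ) := by
    rw [Complex.mul_conj, hs, Complex.sq_norm]
  have hkey : Complex.I * a / b * U + (Complex.I * b * b - Complex.I * a * c) / b ^ 2
      = Complex.I * (((1 - s)/(1+s) : ℝ) : ℂ) := by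
    rw [hU]
    have hSC : (1 : ℂ) + (s : ℂ) ≠ 0 := by
      have := Complex.ofReal_ne_zero.mpr hS
      push_cast at this
      exact this
    rw [Complex.ofReal_add, Complex.ofReal_one]
    push_cast
    field_simp
    linear_combination (-(2 * b ^ 2)) * hconj
  have hre0 : (Complex.I * a / b * U
      + (Complex.I * b * b - Complex.I * a * c) / b ^ 2).re = 0 := by
    rw [hkey, Complex.mul_re]
    simp only [Complex.I_re, Complex.I_im, Complex.ofReal_re, Complex.ofReal_im]
    ring
  calc (Complex.I * a / b).re *
        (((starRingEnd ℂ) b * (c * 1)).re / ‖b‖ ^ 2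
          - 2 * ((starRingEnd ℂ) a * (b * 1)).re / (1 + s))
      + (Complex.I * a / b).im *
        (((starRingEnd ℂ) b * (c * Complex.I)).re / ‖b‖ ^ 2
          - 2 * ((starRingEnd ℂ) a * (b * Complex.I)).re / (1 + s))
      + ((Complex.I * b * b - Complex.I * a * c) / b ^ 2).re
      = (Complex.I * a / b * U
          + (Complex.I * b * b - Complex.I * a * c) / b ^ 2).re := by
        rw [← hUre, ← hUim, Complex.add_re, Complex.mul_re]
        ring
    _ = 0 := hre0


/-- Proposition 1: Let `γ` be holomorphic on the open set `Ω` with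
`γ' ≠ 0`, and let `u` be the associated Liouville solution. Define
`φ₀(z) = i·γ(z)/γ'(z)` (so that `γ'·φ₀ = i·γ`), `ξ = Re φ₀`, `η = Im φ₀`. Then `u`
is invariant under the Lie vector field determined by `φ₀`:
`ξ·u_x + η·u_y + Re φ₀'(z) = 0` for all `z = x + iy ∈ Ω`. -/
theorem liouville_solution_invariant_vector_field (Ω : Set ℂ) (hΩ : IsOpen Ω)
    (γ : ℂ → ℂ) (hγ : DifferentiableOn ℂ γ Ω)
    (hγ' : ∀ z ∈ Ω, deriv γ z ≠ 0) :
    let φ₀ : ℂ → ℂ := fun z => Complex.I * γ z / deriv γ z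
    ∀ x y : ℝ, (x : ℂ) + (y : ℂ) * Complex.I ∈ Ω →
      (φ₀ ((x : ℂ) + (y : ℂ) * Complex.I)).re *
          deriv (fun x' : ℝ => liouvilleSol γ (x', y)) x
        + (φ₀ ((x : ℂ) + (y : ℂ) * Complex.I)).im *
          deriv (fun y' : ℝ => liouvilleSol γ (x, y')) y
        + (deriv φ₀ ((x : ℂ) + (y : ℂ) * Complex.I)).re = 0 := by
  intro φ₀ x y hz
  set z : ℂ := (x : ℂ) + (y : ℂ) * Complex.I with hzdef
  have hb : deriv γ z ≠ 0 := hγ' z hz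
  set a : ℂ := γ z
  set b : ℂ := deriv γ z
  set c : ℂ := deriv (deriv γ) z
  -- paths
  have hp1 : HasDerivAt (fun x' : ℝ => (x' : ℂ) + (y : ℂ) * Complex.I) 1 x := by
    have : HasDerivAt (fun w : ℂ => w + (y : ℂ) * Complex.I) 1 (x : ℂ) :=
      (hasDerivAt_id _).add_const _
    exact this.comp_ofReal
  have hp2 : HasDerivAt (fun y' : ℝ => (x : ℂ) + (y' : ℂ) * Complex.I) Complex.I y := by
    have : HasDerivAt (fun w : ℂ => (x : ℂ) + w * Complex.I) Complex.I (y : ℂ) := by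
      simpa using (hasDerivAt_mul_const Complex.I (x := (y:ℂ))).const_add ((x:ℂ))
    exact this.comp_ofReal
  -- partial derivatives of the Liouville solution
  have hux : HasDerivAt (fun x' : ℝ => liouvilleSol γ (x', y))
      (((starRingEnd ℂ) b * (c * 1)).re / ‖b‖ ^ 2
        - 2 * ((starRingEnd ℂ) a * (b * 1)).re / (1 + ‖a‖ ^ 2)) x := by
    have := hasDerivAt_log_expr hΩ hγ hz hb hp1 rfl
    simpa [liouvilleSol] using this
  have huy : HasDerivAt (fun y' : ℝ => liouvilleSol γ (x, y'))
      (((starRingEnd ℂ) b * (c * Complex.I)).re / ‖b‖ ^ 2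
        - 2 * ((starRingEnd ℂ) a * (b * Complex.I)).re / (1 + ‖a‖ ^ 2)) y := by
    have := hasDerivAt_log_expr hΩ hγ hz hb hp2 rfl
    simpa [liouvilleSol] using this
  -- derivative of φ₀
  have hA : AnalyticOnNhd ℂ γ Ω := hγ.analyticOnNhd hΩ
  have hdγ : HasDerivAt γ b z := (hA z hz).differentiableAt.hasDerivAt
  have hdγ' : HasDerivAt (deriv γ) c z := (hA.deriv z hz).differentiableAt.hasDerivAt
  have hφ : HasDerivAt φ₀ ((Complex.I * b * b - Complex.I * a * c) / b ^ 2) z :=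
    (hdγ.const_mul Complex.I).div hdγ' hb
  rw [hux.deriv, huy.deriv, hφ.deriv]
  exact liouville_algebra a b c hb
end

section
/- Let u, v : ℝ³ → ℝ be smooth functions of (x, y, t) solving the plasma system ∂_t(u - ∇²u ± ∇²v) + {v ± u, u - ∇²u ± ∇²v} = 0 (both sign choices), and let A, B : ℝ → ℝ be arbitrary smooth functions of t. Then the functions ũ(x,y,t) = u(x - A(t), y - B(t), t) and ṽ(x,y,t) = x·B'(t) - y·A'(t) - (1/2)(A(t)B'(t) - A'(t)B(t)) + v(x - A(t), y - B(t), t) also solve the same system. -/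
/-- Partial derivative in `x` of a function of `(x, y, t)`. -/
noncomputable def pdx (f : ℝ → ℝ → ℝ → ℝ) (x y t : ℝ) : ℝ :=
  deriv (fun x' => f x' y t) x

/-- Partial derivative in `y` of a function of `(x, y, t)`. -/
noncomputable def pdy (f : ℝ → ℝ → ℝ → ℝ) (x y t : ℝ) : ℝ :=
  deriv (fun y' => f x y' t) y

/-- Partial derivative in `t` of a function of `(x, y, t)`. -/
noncomputable def pdt (f : ℝ → ℝ → ℝ → ℝ) (x y t : ℝ) : ℝ :=
  deriv (fun t' => f x y t') t

/-- Two-dimensional Laplacian `∇²f = f_xx + f_yy` (derivatives in `x`, `y` only). -/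
noncomputable def lap (f : ℝ → ℝ → ℝ → ℝ) (x y t : ℝ) : ℝ :=
  deriv (deriv (fun x' => f x' y t)) x + deriv (deriv (fun y' => f x y' t)) y

/-- Poisson bracket `{f, g} = f_x g_y - g_x f_y`. -/
noncomputable def pb (f g : ℝ → ℝ → ℝ → ℝ) (x y t : ℝ) : ℝ :=
  pdx f x y t * pdy g x y t - pdx g x y t * pdy f x y t

/-- The quantity `u - ∇²u + ε ∇²v` (with sign `ε = ±1`). -/
noncomputable def plasmaW (ε : ℝ) (u v : ℝ → ℝ → ℝ → ℝ) : ℝ → ℝ → ℝ → ℝ :=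
  fun x y t => u x y t - lap u x y t + ε * lap v x y t

/-- The plasma system `∂_t(u - ∇²u ± ∇²v) + {v ± u, u - ∇²u ± ∇²v} = 0`
(both sign choices `ε = 1` and `ε = -1`). -/
def IsPlasmaSol (u v : ℝ → ℝ → ℝ → ℝ) : Prop :=
  ∀ ε ∈ ({1, -1} : Set ℝ), ∀ x y t : ℝ,
    pdt (plasmaW ε u v) x y t
      + pb (fun x' y' t' => v x' y' t' + ε * u x' y' t') (plasmaW ε u v) x y t = 0

/-- Smoothness of a function of `(x, y, t)`. -/
def Smooth3 (f : ℝ → ℝ → ℝ → ℝ) : Prop :=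
  ContDiff ℝ (⊤ : ℕ∞) (fun p : ℝ × ℝ × ℝ => f p.1 p.2.1 p.2.2)

noncomputable def unc (f : ℝ → ℝ → ℝ → ℝ) : ℝ × ℝ × ℝ → ℝ := fun p => f p.1 p.2.1 p.2.2

lemma hasDerivAt_unc_x (f : ℝ → ℝ → ℝ → ℝ) (hf : Smooth3 f) (x y t : ℝ) :
    HasDerivAt (fun x' => f x' y t) (fderiv ℝ (unc f) (x, y, t) (1, 0, 0)) x := by
  have hc : HasDerivAt (fun x' : ℝ => ((x', y, t) : ℝ × ℝ × ℝ)) (1, 0, 0) x :=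
    (hasDerivAt_id x).prodMk ((hasDerivAt_const x y).prodMk (hasDerivAt_const x t))
  exact ((ContDiff.differentiable hf (by simp) (x, y, t)).hasFDerivAt).comp_hasDerivAt x hc

lemma hasDerivAt_unc_y (f : ℝ → ℝ → ℝ → ℝ) (hf : Smooth3 f) (x y t : ℝ) :
    HasDerivAt (fun y' => f x y' t) (fderiv ℝ (unc f) (x, y, t) (0, 1, 0)) y := by
  have hc : HasDerivAt (fun y' : ℝ => ((x, y', t) : ℝ × ℝ × ℝ)) (0, 1, 0) y :=
    (hasDerivAt_const y x).prodMk ((hasDerivAt_id y).prodMk (hasDerivAt_const y t))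
  exact ((ContDiff.differentiable hf (by simp) (x, y, t)).hasFDerivAt).comp_hasDerivAt y hc

lemma hasDerivAt_unc_t (f : ℝ → ℝ → ℝ → ℝ) (hf : Smooth3 f) (x y t : ℝ) :
    HasDerivAt (fun t' => f x y t') (fderiv ℝ (unc f) (x, y, t) (0, 0, 1)) t := by
  have hc : HasDerivAt (fun t' : ℝ => ((x, y, t') : ℝ × ℝ × ℝ)) (0, 0, 1) t :=
    (hasDerivAt_const t x).prodMk ((hasDerivAt_const t y).prodMk (hasDerivAt_id t))
  exact ((ContDiff.differentiable hf (by simp) (x, y, t)).hasFDerivAt).comp_hasDerivAt t hc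

lemma pdx_eq (f : ℝ → ℝ → ℝ → ℝ) (hf : Smooth3 f) (x y t : ℝ) :
    pdx f x y t = fderiv ℝ (unc f) (x, y, t) (1, 0, 0) := (hasDerivAt_unc_x f hf x y t).deriv
lemma pdy_eq (f : ℝ → ℝ → ℝ → ℝ) (hf : Smooth3 f) (x y t : ℝ) :
    pdy f x y t = fderiv ℝ (unc f) (x, y, t) (0, 1, 0) := (hasDerivAt_unc_y f hf x y t).deriv
lemma pdt_eq (f : ℝ → ℝ → ℝ → ℝ) (hf : Smooth3 f) (x y t : ℝ) :
    pdt f x y t = fderiv ℝ (unc f) (x, y, t) (0, 0, 1) := (hasDerivAt_unc_t f hf x y t).deriv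

lemma hasDerivAt_pdx (f : ℝ → ℝ → ℝ → ℝ) (hf : Smooth3 f) (x y t : ℝ) :
    HasDerivAt (fun x' => f x' y t) (pdx f x y t) x := by
  rw [pdx_eq f hf]; exact hasDerivAt_unc_x f hf x y t
lemma hasDerivAt_pdy (f : ℝ → ℝ → ℝ → ℝ) (hf : Smooth3 f) (x y t : ℝ) :
    HasDerivAt (fun y' => f x y' t) (pdy f x y t) y := by
  rw [pdy_eq f hf]; exact hasDerivAt_unc_y f hf x y t

lemma smooth3_pdx (f : ℝ → ℝ → ℝ → ℝ) (hf : Smooth3 f) : Smooth3 (pdx f) := by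
  have h : (fun p : ℝ × ℝ × ℝ => pdx f p.1 p.2.1 p.2.2)
      = fun p => fderiv ℝ (unc f) p (1, 0, 0) :=
    funext fun p => pdx_eq f hf p.1 p.2.1 p.2.2
  unfold Smooth3
  rw [h]
  exact (ContDiff.fderiv_right hf (by simp)).clm_apply contDiff_const

lemma smooth3_pdy (f : ℝ → ℝ → ℝ → ℝ) (hf : Smooth3 f) : Smooth3 (pdy f) := by
  have h : (fun p : ℝ × ℝ × ℝ => pdy f p.1 p.2.1 p.2.2)
      = fun p => fderiv ℝ (unc f) p (0, 1, 0) :=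
    funext fun p => pdy_eq f hf p.1 p.2.1 p.2.2
  unfold Smooth3
  rw [h]
  exact (ContDiff.fderiv_right hf (by simp)).clm_apply contDiff_const

lemma smooth3_lap (f : ℝ → ℝ → ℝ → ℝ) (hf : Smooth3 f) : Smooth3 (lap f) := by
  show ContDiff ℝ (⊤ : ℕ∞) (fun p : ℝ × ℝ × ℝ => lap f p.1 p.2.1 p.2.2)
  have h : (fun p : ℝ × ℝ × ℝ => lap f p.1 p.2.1 p.2.2)
      = fun p : ℝ × ℝ × ℝ => pdx (pdx f) p.1 p.2.1 p.2.2 + pdy (pdy f) p.1 p.2.1 p.2.2 := rfl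
  rw [h]
  exact ContDiff.add (smooth3_pdx _ (smooth3_pdx f hf)) (smooth3_pdy _ (smooth3_pdy f hf))

lemma hasDerivAt_shift_x (f : ℝ → ℝ → ℝ → ℝ) (hf : Smooth3 f) (a c t x : ℝ) :
    HasDerivAt (fun x' => f (x' - a) c t) (pdx f (x - a) c t) x :=
  HasDerivAt.comp_sub_const x a (hasDerivAt_pdx f hf (x - a) c t)

lemma hasDerivAt_shift_y (f : ℝ → ℝ → ℝ → ℝ) (hf : Smooth3 f) (c b t y : ℝ) :
    HasDerivAt (fun y' => f c (y' - b) t) (pdy f c (y - b) t) y :=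
  HasDerivAt.comp_sub_const y b (hasDerivAt_pdy f hf c (y - b) t)

lemma deriv2_shift (g : ℝ → ℝ) (a x : ℝ) :
    deriv (deriv (fun z => g (z - a))) x = deriv (deriv g) (x - a) := by
  have h : deriv (fun z => g (z - a)) = fun z => deriv g (z - a) :=
    funext fun z => deriv_comp_sub_const g a z
  rw [h]
  exact deriv_comp_sub_const (deriv g) a x

lemma deriv_comp_curve (f : ℝ → ℝ → ℝ → ℝ) (hf : Smooth3 f) (A B : ℝ → ℝ)
    (hA : ContDiff ℝ (⊤ : ℕ∞) A) (hB : ContDiff ℝ (⊤ : ℕ∞) B) (x y t : ℝ) :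
    deriv (fun t' => f (x - A t') (y - B t') t') t
      = pdt f (x - A t) (y - B t) t
        - deriv A t * pdx f (x - A t) (y - B t) t
        - deriv B t * pdy f (x - A t) (y - B t) t := by
  have hA' : HasDerivAt (fun t' => x - A t') (-deriv A t) t :=
    ((ContDiff.differentiable hA (by simp) t).hasDerivAt).const_sub x
  have hB' : HasDerivAt (fun t' => y - B t') (-deriv B t) t :=
    ((ContDiff.differentiable hB (by simp) t).hasDerivAt).const_sub y
  have hc : HasDerivAt (fun t' => ((x - A t', y - B t', t') : ℝ × ℝ × ℝ))
      (-deriv A t, -deriv B t, 1) t := hA'.prodMk (hB'.prodMk (hasDerivAt_id t))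
  have key := ((ContDiff.differentiable hf (by simp)
      (x - A t, y - B t, t)).hasFDerivAt).comp_hasDerivAt t hc
  have e2 : deriv (fun t' => f (x - A t') (y - B t') t') t
      = fderiv ℝ (unc f) (x - A t, y - B t, t) (-deriv A t, -deriv B t, 1) := key.deriv
  rw [e2]
  have hv3 : ((-deriv A t, -deriv B t, (1:ℝ)) : ℝ × ℝ × ℝ)
      = (-deriv A t) • ((1, 0, 0) : ℝ × ℝ × ℝ) + (-deriv B t) • ((0, 1, 0) : ℝ × ℝ × ℝ)
        + ((0, 0, 1) : ℝ × ℝ × ℝ) := by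
    simp [Prod.ext_iff]
  rw [hv3, map_add, map_add, map_smul, map_smul,
    ← pdx_eq f hf, ← pdy_eq f hf, ← pdt_eq f hf]
  simp [smul_eq_mul]
  ring


lemma smooth3_W (ε : ℝ) (u v : ℝ → ℝ → ℝ → ℝ) (hu : Smooth3 u) (hv : Smooth3 v) :
    Smooth3 (plasmaW ε u v) := by
  show ContDiff ℝ (⊤ : ℕ∞) (fun p : ℝ × ℝ × ℝ =>
    u p.1 p.2.1 p.2.2 - lap u p.1 p.2.1 p.2.2 + ε * lap v p.1 p.2.1 p.2.2)
  exact ContDiff.add (ContDiff.sub hu (smooth3_lap u hu))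
    (ContDiff.mul contDiff_const (smooth3_lap v hv))

lemma plasmaW_shift (ε : ℝ) (u v : ℝ → ℝ → ℝ → ℝ) (hv : Smooth3 v) (A B : ℝ → ℝ)
    (X Y T : ℝ) :
    plasmaW ε (fun x y t => u (x - A t) (y - B t) t)
      (fun x y t =>
        x * deriv B t - y * deriv A t
          - (1 / 2) * (A t * deriv B t - deriv A t * B t)
          + v (x - A t) (y - B t) t) X Y T
      = plasmaW ε u v (X - A T) (Y - B T) T := by
  have a1 : deriv (deriv (fun x' => u (x' - A T) (Y - B T) T)) X
      = deriv (deriv (fun z => u z (Y - B T) T)) (X - A T) :=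
    deriv2_shift (fun z => u z (Y - B T) T) (A T) X
  have a2 : deriv (deriv (fun y' => u (X - A T) (y' - B T) T)) Y
      = deriv (deriv (fun z => u (X - A T) z T)) (Y - B T) :=
    deriv2_shift (fun z => u (X - A T) z T) (B T) Y
  have d1 : deriv (fun x' =>
        x' * deriv B T - Y * deriv A T - 1 / 2 * (A T * deriv B T - deriv A T * B T)
          + v (x' - A T) (Y - B T) T)
      = fun x' => 1 * deriv B T + pdx v (x' - A T) (Y - B T) T := by
    funext x'
    exact ((((hasDerivAt_id x').mul_const (deriv B T)).sub_const (Y * deriv A T)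
      |>.sub_const (1 / 2 * (A T * deriv B T - deriv A T * B T))).add
      (hasDerivAt_shift_x v hv (A T) (Y - B T) T x')).deriv
  have d2 : deriv (fun y' =>
        X * deriv B T - y' * deriv A T - 1 / 2 * (A T * deriv B T - deriv A T * B T)
          + v (X - A T) (y' - B T) T)
      = fun y' => -(1 * deriv A T) + pdy v (X - A T) (y' - B T) T := by
    funext y'
    exact (((((hasDerivAt_id y').mul_const (deriv A T)).const_sub (X * deriv B T))
      |>.sub_const (1 / 2 * (A T * deriv B T - deriv A T * B T))).add
      (hasDerivAt_shift_y v hv (X - A T) (B T) T y')).deriv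
  have d1b : deriv (fun x' => 1 * deriv B T + pdx v (x' - A T) (Y - B T) T) X
      = deriv (deriv (fun z => v z (Y - B T) T)) (X - A T) := by
    rw [deriv_const_add]
    exact deriv_comp_sub_const (fun z => pdx v z (Y - B T) T) (A T) X
  have d2b : deriv (fun y' => -(1 * deriv A T) + pdy v (X - A T) (y' - B T) T) Y
      = deriv (deriv (fun z => v (X - A T) z T)) (Y - B T) := by
    rw [deriv_const_add]
    exact deriv_comp_sub_const (fun z => pdy v (X - A T) z T) (B T) Y
  show u (X - A T) (Y - B T) T
      - (deriv (deriv (fun x' => u (x' - A T) (Y - B T) T)) X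
        + deriv (deriv (fun y' => u (X - A T) (y' - B T) T)) Y)
      + ε * (deriv (deriv (fun x' =>
            x' * deriv B T - Y * deriv A T - 1 / 2 * (A T * deriv B T - deriv A T * B T)
              + v (x' - A T) (Y - B T) T)) X
        + deriv (deriv (fun y' =>
            X * deriv B T - y' * deriv A T - 1 / 2 * (A T * deriv B T - deriv A T * B T)
              + v (X - A T) (y' - B T) T)) Y)
      = _
  rw [a1, a2, d1, d2, d1b, d2b]
  rfl


/-- If smooth `u`, `v` solve the plasma system and `A`, `B` are arbitrary
smooth functions of `t`, then `ũ(x,y,t) = u(x - A(t), y - B(t), t)` and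
`ṽ(x,y,t) = x·B'(t) - y·A'(t) - (1/2)(A·B' - A'·B) + v(x - A(t), y - B(t), t)`
also solve the system (the Lie point symmetry `X₍A,B₎`). -/
theorem plasma_symmetry_X_AB (u v : ℝ → ℝ → ℝ → ℝ)
    (hu : Smooth3 u) (hv : Smooth3 v)
    (A B : ℝ → ℝ) (hA : ContDiff ℝ (⊤ : ℕ∞) A) (hB : ContDiff ℝ (⊤ : ℕ∞) B)
    (hsol : IsPlasmaSol u v) :
    IsPlasmaSol (fun x y t => u (x - A t) (y - B t) t)
      (fun x y t =>
        x * deriv B t - y * deriv A t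
          - (1 / 2) * (A t * deriv B t - deriv A t * B t)
          + v (x - A t) (y - B t) t) := by
  intro ε hε x y t
  have hW : Smooth3 (plasmaW ε u v) := smooth3_W ε u v hu hv
  have R1 : ∀ X Y T : ℝ,
      plasmaW ε (fun x y t => u (x - A t) (y - B t) t)
        (fun x y t =>
          x * deriv B t - y * deriv A t
            - (1 / 2) * (A t * deriv B t - deriv A t * B t)
            + v (x - A t) (y - B t) t) X Y T
      = plasmaW ε u v (X - A T) (Y - B T) T := plasmaW_shift ε u v hv A B
  have hs := hsol ε hε (x - A t) (y - B t) t
  have bx : pdx (fun x' y' t' => v x' y' t' + ε * u x' y' t') (x - A t) (y - B t) t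
      = pdx v (x - A t) (y - B t) t + ε * pdx u (x - A t) (y - B t) t :=
    ((hasDerivAt_pdx v hv (x - A t) (y - B t) t).add
      ((hasDerivAt_pdx u hu (x - A t) (y - B t) t).const_mul ε)).deriv
  have by' : pdy (fun x' y' t' => v x' y' t' + ε * u x' y' t') (x - A t) (y - B t) t
      = pdy v (x - A t) (y - B t) t + ε * pdy u (x - A t) (y - B t) t :=
    ((hasDerivAt_pdy v hv (x - A t) (y - B t) t).add
      ((hasDerivAt_pdy u hu (x - A t) (y - B t) t).const_mul ε)).deriv
  have e_pdt : pdt (plasmaW ε (fun x y t => u (x - A t) (y - B t) t)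
        (fun x y t =>
          x * deriv B t - y * deriv A t
            - (1 / 2) * (A t * deriv B t - deriv A t * B t)
            + v (x - A t) (y - B t) t)) x y t
      = pdt (plasmaW ε u v) (x - A t) (y - B t) t
        - deriv A t * pdx (plasmaW ε u v) (x - A t) (y - B t) t
        - deriv B t * pdy (plasmaW ε u v) (x - A t) (y - B t) t := by
    show deriv (fun t' => plasmaW ε (fun x y t => u (x - A t) (y - B t) t)
        (fun x y t =>
          x * deriv B t - y * deriv A t
            - (1 / 2) * (A t * deriv B t - deriv A t * B t)
            + v (x - A t) (y - B t) t) x y t') t = _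
    have hfe : (fun t' => plasmaW ε (fun x y t => u (x - A t) (y - B t) t)
        (fun x y t =>
          x * deriv B t - y * deriv A t
            - (1 / 2) * (A t * deriv B t - deriv A t * B t)
            + v (x - A t) (y - B t) t) x y t')
        = fun t' => plasmaW ε u v (x - A t') (y - B t') t' :=
      funext fun t' => R1 x y t'
    rw [hfe]
    exact deriv_comp_curve (plasmaW ε u v) hW A B hA hB x y t
  have e_pdxW : pdx (plasmaW ε (fun x y t => u (x - A t) (y - B t) t)
        (fun x y t =>
          x * deriv B t - y * deriv A t
            - (1 / 2) * (A t * deriv B t - deriv A t * B t)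
            + v (x - A t) (y - B t) t)) x y t
      = pdx (plasmaW ε u v) (x - A t) (y - B t) t := by
    show deriv (fun x' => plasmaW ε (fun x y t => u (x - A t) (y - B t) t)
        (fun x y t =>
          x * deriv B t - y * deriv A t
            - (1 / 2) * (A t * deriv B t - deriv A t * B t)
            + v (x - A t) (y - B t) t) x' y t) x = _
    have hfe : (fun x' => plasmaW ε (fun x y t => u (x - A t) (y - B t) t)
        (fun x y t =>
          x * deriv B t - y * deriv A t
            - (1 / 2) * (A t * deriv B t - deriv A t * B t)
            + v (x - A t) (y - B t) t) x' y t)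
        = fun x' => plasmaW ε u v (x' - A t) (y - B t) t :=
      funext fun x' => R1 x' y t
    rw [hfe]
    exact deriv_comp_sub_const (fun z => plasmaW ε u v z (y - B t) t) (A t) x
  have e_pdyW : pdy (plasmaW ε (fun x y t => u (x - A t) (y - B t) t)
        (fun x y t =>
          x * deriv B t - y * deriv A t
            - (1 / 2) * (A t * deriv B t - deriv A t * B t)
            + v (x - A t) (y - B t) t)) x y t
      = pdy (plasmaW ε u v) (x - A t) (y - B t) t := by
    show deriv (fun y' => plasmaW ε (fun x y t => u (x - A t) (y - B t) t)
        (fun x y t =>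
          x * deriv B t - y * deriv A t
            - (1 / 2) * (A t * deriv B t - deriv A t * B t)
            + v (x - A t) (y - B t) t) x y' t) y = _
    have hfe : (fun y' => plasmaW ε (fun x y t => u (x - A t) (y - B t) t)
        (fun x y t =>
          x * deriv B t - y * deriv A t
            - (1 / 2) * (A t * deriv B t - deriv A t * B t)
            + v (x - A t) (y - B t) t) x y' t)
        = fun y' => plasmaW ε u v (x - A t) (y' - B t) t :=
      funext fun y' => R1 x y' t
    rw [hfe]
    exact deriv_comp_sub_const (fun z => plasmaW ε u v (x - A t) z t) (B t) y
  have e_px : pdx (fun x' y' t' =>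
        (fun x y t =>
          x * deriv B t - y * deriv A t
            - (1 / 2) * (A t * deriv B t - deriv A t * B t)
            + v (x - A t) (y - B t) t) x' y' t'
        + ε * (fun x y t => u (x - A t) (y - B t) t) x' y' t') x y t
      = 1 * deriv B t + pdx v (x - A t) (y - B t) t
        + ε * pdx u (x - A t) (y - B t) t :=
    (((((hasDerivAt_id x).mul_const (deriv B t)).sub_const (y * deriv A t)).sub_const
      (1 / 2 * (A t * deriv B t - deriv A t * B t))).add
      (hasDerivAt_shift_x v hv (A t) (y - B t) t x) |>.add
      ((hasDerivAt_shift_x u hu (A t) (y - B t) t x).const_mul ε)).deriv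
  have e_py : pdy (fun x' y' t' =>
        (fun x y t =>
          x * deriv B t - y * deriv A t
            - (1 / 2) * (A t * deriv B t - deriv A t * B t)
            + v (x - A t) (y - B t) t) x' y' t'
        + ε * (fun x y t => u (x - A t) (y - B t) t) x' y' t') x y t
      = -(1 * deriv A t) + pdy v (x - A t) (y - B t) t
        + ε * pdy u (x - A t) (y - B t) t :=
    (((((hasDerivAt_id y).mul_const (deriv A t)).const_sub (x * deriv B t)).sub_const
      (1 / 2 * (A t * deriv B t - deriv A t * B t))).add
      (hasDerivAt_shift_y v hv (x - A t) (B t) t y) |>.add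
      ((hasDerivAt_shift_y u hu (x - A t) (B t) t y).const_mul ε)).deriv
  unfold pb at hs ⊢
  rw [bx, by'] at hs
  rw [e_pdt, e_pdxW, e_pdyW, e_px, e_py]
  linear_combination hs
end

section
/- Let A, B : ℝ → ℝ be smooth with A(t)² + B(t)² > 0 for all t, and let F, G : ℝ → ℝ be arbitrary smooth functions. Suppose U₀, V₀ : ℝ² → ℝ are smooth functions of (s, t) satisfying, for all (s,t), the reduced equations U₀(s,t) - (A(t)² + B(t)²)·∂²U₀/∂s²(s,t) = F(s) and (A(t)² + B(t)²)·∂²V₀/∂s²(s,t) = G(s). Then the pair u(x,y,t) = U₀(B(t)x - A(t)y, t), v(x,y,t) = Q(x,y,t) + V₀(B(t)x - A(t)y, t), where Q(x,y,t) = (1/(2(A²+B²)))·[ (A'B + AB')(x² - y²) - 2xy(AA' - BB') ], solves the plasma system ∂_t(u - ∇²u ± ∇²v) + {v ± u, u - ∇²u ± ∇²v} = 0 (both sign choices). -/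
lemma hasDerivAt_comp_x (g : ℝ → ℝ) (hg : Differentiable ℝ g) (b c x : ℝ) :
    HasDerivAt (fun x' => g (b * x' - c)) (b * deriv g (b * x - c)) x := by
  have h1 : HasDerivAt (fun x' : ℝ => b * x' - c) b x := by
    simpa using ((hasDerivAt_id x).const_mul b).sub_const c
  have h2 := ((hg (b * x - c)).hasDerivAt).comp x h1
  exact h2.congr_deriv (by ring)

lemma hasDerivAt_comp_y (g : ℝ → ℝ) (hg : Differentiable ℝ g) (c a y : ℝ) :
    HasDerivAt (fun y' => g (c - a * y')) (-(a * deriv g (c - a * y))) y := by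
  have h1 : HasDerivAt (fun y' : ℝ => c - a * y') (-a) y := by
    simpa using ((hasDerivAt_id y).const_mul a).const_sub c
  have h2 := ((hg (c - a * y)).hasDerivAt).comp y h1
  have h3 : HasDerivAt (fun y' => g (c - a * y')) (deriv g (c - a * y) * (-a)) y := h2
  convert h3 using 1
  ring

lemma deriv_of_top (g : ℝ → ℝ) (hg : ContDiff ℝ (⊤ : ℕ∞) g) : Differentiable ℝ (deriv g) := by
  have h : ContDiff ℝ (⊤ : ℕ∞) g := hg.of_le (by simp)
  exact (contDiff_infty_iff_deriv.mp h).2.differentiable (by simp)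

lemma deriv2_comp_x (g : ℝ → ℝ) (hg : ContDiff ℝ (⊤ : ℕ∞) g) (b c x : ℝ) :
    deriv (deriv (fun x' => g (b * x' - c))) x
      = b * (b * deriv (deriv g) (b * x - c)) := by
  have hg1 := hg.differentiable (by simp)
  have hg2 := deriv_of_top g hg
  have h1 : deriv (fun x' => g (b * x' - c)) = fun x' => b * deriv g (b * x' - c) :=
    funext fun x' => (hasDerivAt_comp_x g hg1 b c x').deriv
  rw [h1]
  exact ((hasDerivAt_comp_x (deriv g) hg2 b c x).const_mul b).deriv

lemma deriv2_comp_y (g : ℝ → ℝ) (hg : ContDiff ℝ (⊤ : ℕ∞) g) (c a y : ℝ) :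
    deriv (deriv (fun y' => g (c - a * y'))) y
      = a * (a * deriv (deriv g) (c - a * y)) := by
  have hg1 := hg.differentiable (by simp)
  have hg2 := deriv_of_top g hg
  have h1 : deriv (fun y' => g (c - a * y')) = fun y' => -(a * deriv g (c - a * y')) :=
    funext fun y' => (hasDerivAt_comp_y g hg1 c a y').deriv
  rw [h1]
  have h2 := (((hasDerivAt_comp_y (deriv g) hg2 c a y).const_mul a).neg).deriv
  exact h2.trans (by ring)

/-- Let `A`, `B` be smooth with `A² + B² > 0`, `F`, `G` arbitrary smooth
functions, and suppose smooth `U₀(s,t)`, `V₀(s,t)` satisfy the reduced equations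
`U₀ - (A² + B²)·U₀_ss = F(s)` and `(A² + B²)·V₀_ss = G(s)`. Then
`u = U₀(Bx - Ay, t)`, `v = Q(x,y,t) + V₀(Bx - Ay, t)`, with the quadrupolar term
`Q = (1/(2(A²+B²)))·[(A'B + AB')(x² - y²) - 2xy(AA' - BB')]`, solve the plasma system. -/
theorem plasma_invariant_solutions_X_AB (A B : ℝ → ℝ)
    (hA : ContDiff ℝ (⊤ : ℕ∞) A) (hB : ContDiff ℝ (⊤ : ℕ∞) B)
    (hAB : ∀ t : ℝ, 0 < A t ^ 2 + B t ^ 2)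
    (F G : ℝ → ℝ) (hF : ContDiff ℝ (⊤ : ℕ∞) F) (hG : ContDiff ℝ (⊤ : ℕ∞) G)
    (U₀ V₀ : ℝ → ℝ → ℝ)
    (hU₀ : ContDiff ℝ (⊤ : ℕ∞) (fun p : ℝ × ℝ => U₀ p.1 p.2))
    (hV₀ : ContDiff ℝ (⊤ : ℕ∞) (fun p : ℝ × ℝ => V₀ p.1 p.2))
    (hUeq : ∀ s t : ℝ,
      U₀ s t - (A t ^ 2 + B t ^ 2) * deriv (deriv (fun s' => U₀ s' t)) s = F s)
    (hVeq : ∀ s t : ℝ,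
      (A t ^ 2 + B t ^ 2) * deriv (deriv (fun s' => V₀ s' t)) s = G s) :
    IsPlasmaSol (fun x y t => U₀ (B t * x - A t * y) t)
      (fun x y t =>
        (1 / (2 * (A t ^ 2 + B t ^ 2))) *
            ((deriv A t * B t + A t * deriv B t) * (x ^ 2 - y ^ 2)
              - 2 * x * y * (A t * deriv A t - B t * deriv B t))
          + V₀ (B t * x - A t * y) t) := by
  have hAd : Differentiable ℝ A := hA.differentiable (by simp)
  have hBd : Differentiable ℝ B := hB.differentiable (by simp)
  have hFd : Differentiable ℝ F := hF.differentiable (by simp)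
  have hGd : Differentiable ℝ G := hG.differentiable (by simp)
  have hUsec : ∀ t : ℝ, ContDiff ℝ (⊤ : ℕ∞) (fun σ => U₀ σ t) := fun t =>
    hU₀.comp (contDiff_id.prodMk contDiff_const)
  have hVsec : ∀ t : ℝ, ContDiff ℝ (⊤ : ℕ∞) (fun σ => V₀ σ t) := fun t =>
    hV₀.comp (contDiff_id.prodMk contDiff_const)
  intro ε hε x y t
  clear hε
  -- Step 1: the conserved quantity is F(s) + ε G(s)
  have hW : plasmaW ε (fun x y t => U₀ (B t * x - A t * y) t)
      (fun x y t =>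
        (1 / (2 * (A t ^ 2 + B t ^ 2))) *
            ((deriv A t * B t + A t * deriv B t) * (x ^ 2 - y ^ 2)
              - 2 * x * y * (A t * deriv A t - B t * deriv B t))
          + V₀ (B t * x - A t * y) t)
      = fun x y t => F (B t * x - A t * y) + ε * G (B t * x - A t * y) := by
    funext x y t
    have hVd1 : Differentiable ℝ (fun σ => V₀ σ t) := (hVsec t).differentiable (by simp)
    have hVd2 : Differentiable ℝ (deriv (fun σ => V₀ σ t)) := deriv_of_top _ (hVsec t)
    simp only [plasmaW, lap]
    have hux : deriv (deriv (fun x' => U₀ (B t * x' - A t * y) t)) x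
        = B t * (B t * deriv (deriv (fun σ => U₀ σ t)) (B t * x - A t * y)) :=
      deriv2_comp_x (fun σ => U₀ σ t) (hUsec t) (B t) (A t * y) x
    have huy : deriv (deriv (fun y' => U₀ (B t * x - A t * y') t)) y
        = A t * (A t * deriv (deriv (fun σ => U₀ σ t)) (B t * x - A t * y)) :=
      deriv2_comp_y (fun σ => U₀ σ t) (hUsec t) (B t * x) (A t) y
    -- x-part of lap v
    have hvx : deriv (deriv (fun x' =>
        (1 / (2 * (A t ^ 2 + B t ^ 2))) *
            ((deriv A t * B t + A t * deriv B t) * (x' ^ 2 - y ^ 2)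
              - 2 * x' * y * (A t * deriv A t - B t * deriv B t))
          + V₀ (B t * x' - A t * y) t)) x
        = (1 / (2 * (A t ^ 2 + B t ^ 2))) * (2 * (deriv A t * B t + A t * deriv B t))
          + B t * (B t * deriv (deriv (fun σ => V₀ σ t)) (B t * x - A t * y)) := by
      have h1 : deriv (fun x' =>
          (1 / (2 * (A t ^ 2 + B t ^ 2))) *
              ((deriv A t * B t + A t * deriv B t) * (x' ^ 2 - y ^ 2)
                - 2 * x' * y * (A t * deriv A t - B t * deriv B t))
            + V₀ (B t * x' - A t * y) t)
          = fun x' =>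
            (1 / (2 * (A t ^ 2 + B t ^ 2))) *
              ((deriv A t * B t + A t * deriv B t) * (2 * x')
                - 2 * y * (A t * deriv A t - B t * deriv B t))
            + B t * deriv (fun σ => V₀ σ t) (B t * x' - A t * y) := by
        funext x'
        have hp : HasDerivAt (fun x'' : ℝ =>
            (deriv A t * B t + A t * deriv B t) * (x'' ^ 2 - y ^ 2)
              - 2 * x'' * y * (A t * deriv A t - B t * deriv B t))
            ((deriv A t * B t + A t * deriv B t) * (2 * x')
              - 2 * y * (A t * deriv A t - B t * deriv B t)) x' := by
          have ha : HasDerivAt (fun x'' : ℝ => x'' ^ 2 - y ^ 2) (2 * x') x' := by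
            simpa using (hasDerivAt_pow 2 x').sub_const (y ^ 2)
          have hb : HasDerivAt (fun x'' : ℝ =>
              2 * x'' * y * (A t * deriv A t - B t * deriv B t))
              (2 * y * (A t * deriv A t - B t * deriv B t)) x' := by
            have := (((hasDerivAt_id x').const_mul (2:ℝ)).mul_const y).mul_const
              (A t * deriv A t - B t * deriv B t)
            exact this.congr_deriv (by ring)
          exact (ha.const_mul _).sub hb
        exact ((hp.const_mul _).add
          (hasDerivAt_comp_x (fun σ => V₀ σ t) hVd1 (B t) (A t * y) x')).deriv
      rw [h1]
      have h2 : HasDerivAt (fun x' =>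
          (1 / (2 * (A t ^ 2 + B t ^ 2))) *
            ((deriv A t * B t + A t * deriv B t) * (2 * x')
              - 2 * y * (A t * deriv A t - B t * deriv B t))
          + B t * deriv (fun σ => V₀ σ t) (B t * x' - A t * y))
          ((1 / (2 * (A t ^ 2 + B t ^ 2))) * (2 * (deriv A t * B t + A t * deriv B t))
            + B t * (B t * deriv (deriv (fun σ => V₀ σ t)) (B t * x - A t * y))) x := by
        have hp : HasDerivAt (fun x' : ℝ =>
            (1 / (2 * (A t ^ 2 + B t ^ 2))) *
              ((deriv A t * B t + A t * deriv B t) * (2 * x')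
                - 2 * y * (A t * deriv A t - B t * deriv B t)))
            ((1 / (2 * (A t ^ 2 + B t ^ 2))) * (2 * (deriv A t * B t + A t * deriv B t))) x := by
          have := ((((hasDerivAt_id x).const_mul (2:ℝ)).const_mul
              (deriv A t * B t + A t * deriv B t)).sub_const
              (2 * y * (A t * deriv A t - B t * deriv B t))).const_mul
              (1 / (2 * (A t ^ 2 + B t ^ 2)))
          exact this.congr_deriv (by ring)
        exact hp.add ((hasDerivAt_comp_x (deriv (fun σ => V₀ σ t)) hVd2 (B t) (A t * y) x).const_mul (B t))
      exact h2.deriv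
    -- y-part of lap v
    have hvy : deriv (deriv (fun y' =>
        (1 / (2 * (A t ^ 2 + B t ^ 2))) *
            ((deriv A t * B t + A t * deriv B t) * (x ^ 2 - y' ^ 2)
              - 2 * x * y' * (A t * deriv A t - B t * deriv B t))
          + V₀ (B t * x - A t * y') t)) y
        = -((1 / (2 * (A t ^ 2 + B t ^ 2))) * (2 * (deriv A t * B t + A t * deriv B t)))
          + A t * (A t * deriv (deriv (fun σ => V₀ σ t)) (B t * x - A t * y)) := by
      have h1 : deriv (fun y' =>
          (1 / (2 * (A t ^ 2 + B t ^ 2))) *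
              ((deriv A t * B t + A t * deriv B t) * (x ^ 2 - y' ^ 2)
                - 2 * x * y' * (A t * deriv A t - B t * deriv B t))
            + V₀ (B t * x - A t * y') t)
          = fun y' =>
            (1 / (2 * (A t ^ 2 + B t ^ 2))) *
              (-((deriv A t * B t + A t * deriv B t) * (2 * y'))
                - 2 * x * (A t * deriv A t - B t * deriv B t))
            + -(A t * deriv (fun σ => V₀ σ t) (B t * x - A t * y')) := by
        funext y'
        have hp : HasDerivAt (fun y'' : ℝ =>
            (deriv A t * B t + A t * deriv B t) * (x ^ 2 - y'' ^ 2)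
              - 2 * x * y'' * (A t * deriv A t - B t * deriv B t))
            (-((deriv A t * B t + A t * deriv B t) * (2 * y'))
              - 2 * x * (A t * deriv A t - B t * deriv B t)) y' := by
          have ha : HasDerivAt (fun y'' : ℝ => x ^ 2 - y'' ^ 2) (-(2 * y')) y' := by
            simpa using (hasDerivAt_pow 2 y').const_sub (x ^ 2)
          have hb : HasDerivAt (fun y'' : ℝ =>
              2 * x * y'' * (A t * deriv A t - B t * deriv B t))
              (2 * x * (A t * deriv A t - B t * deriv B t)) y' := by
            have := (((hasDerivAt_id y').const_mul (2 * x)).mul_const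
              (A t * deriv A t - B t * deriv B t))
            exact this.congr_deriv (by ring)
          have := (ha.const_mul (deriv A t * B t + A t * deriv B t)).sub hb
          exact this.congr_deriv (by ring)
        exact ((hp.const_mul _).add
          (hasDerivAt_comp_y (fun σ => V₀ σ t) hVd1 (B t * x) (A t) y')).deriv
      rw [h1]
      have h2 : HasDerivAt (fun y' =>
          (1 / (2 * (A t ^ 2 + B t ^ 2))) *
            (-((deriv A t * B t + A t * deriv B t) * (2 * y'))
              - 2 * x * (A t * deriv A t - B t * deriv B t))
          + -(A t * deriv (fun σ => V₀ σ t) (B t * x - A t * y')))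
          (-((1 / (2 * (A t ^ 2 + B t ^ 2))) * (2 * (deriv A t * B t + A t * deriv B t)))
            + A t * (A t * deriv (deriv (fun σ => V₀ σ t)) (B t * x - A t * y))) y := by
        have hp : HasDerivAt (fun y' : ℝ =>
            (1 / (2 * (A t ^ 2 + B t ^ 2))) *
              (-((deriv A t * B t + A t * deriv B t) * (2 * y'))
                - 2 * x * (A t * deriv A t - B t * deriv B t)))
            (-((1 / (2 * (A t ^ 2 + B t ^ 2))) * (2 * (deriv A t * B t + A t * deriv B t)))) y := by
          have := (((((hasDerivAt_id y).const_mul (2:ℝ)).const_mul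
              (deriv A t * B t + A t * deriv B t)).neg).sub_const
              (2 * x * (A t * deriv A t - B t * deriv B t))).const_mul
              (1 / (2 * (A t ^ 2 + B t ^ 2)))
          exact this.congr_deriv (by ring)
        have hq := ((hasDerivAt_comp_y (deriv (fun σ => V₀ σ t)) hVd2 (B t * x) (A t) y).const_mul (A t)).neg
        have := hp.add hq
        exact this.congr_deriv (by ring)
      exact h2.deriv
    rw [hux, huy, hvx, hvy]
    linear_combination hUeq (B t * x - A t * y) t + ε * hVeq (B t * x - A t * y) t
  rw [hW]
  -- Step 2: remaining first-order derivatives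
  have hHd : Differentiable ℝ (fun σ => F σ + ε * G σ) :=
    hFd.add (hGd.const_mul ε)
  have hUd1 : Differentiable ℝ (fun σ => U₀ σ t) := (hUsec t).differentiable (by simp)
  have hVd1 : Differentiable ℝ (fun σ => V₀ σ t) := (hVsec t).differentiable (by simp)
  simp only [pdt, pb, pdx, pdy]
  have hdt : deriv (fun t' => F (B t' * x - A t' * y) + ε * G (B t' * x - A t' * y)) t
      = deriv (fun σ => F σ + ε * G σ) (B t * x - A t * y) * (deriv B t * x - deriv A t * y) := by
    have hφ : HasDerivAt (fun t' => B t' * x - A t' * y) (deriv B t * x - deriv A t * y) t :=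
      ((hBd t).hasDerivAt.mul_const x).sub ((hAd t).hasDerivAt.mul_const y)
    exact ((hHd (B t * x - A t * y)).hasDerivAt.comp t hφ).deriv
  have hwx : deriv (fun x' => F (B t * x' - A t * y) + ε * G (B t * x' - A t * y)) x
      = B t * deriv (fun σ => F σ + ε * G σ) (B t * x - A t * y) :=
    (hasDerivAt_comp_x (fun σ => F σ + ε * G σ) hHd (B t) (A t * y) x).deriv
  have hwy : deriv (fun y' => F (B t * x - A t * y') + ε * G (B t * x - A t * y')) y
      = -(A t * deriv (fun σ => F σ + ε * G σ) (B t * x - A t * y)) :=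
    (hasDerivAt_comp_y (fun σ => F σ + ε * G σ) hHd (B t * x) (A t) y).deriv
  have hfx : deriv (fun x' =>
      (1 / (2 * (A t ^ 2 + B t ^ 2))) *
          ((deriv A t * B t + A t * deriv B t) * (x' ^ 2 - y ^ 2)
            - 2 * x' * y * (A t * deriv A t - B t * deriv B t))
        + V₀ (B t * x' - A t * y) t + ε * U₀ (B t * x' - A t * y) t) x
      = (1 / (2 * (A t ^ 2 + B t ^ 2))) *
          ((deriv A t * B t + A t * deriv B t) * (2 * x)
            - 2 * y * (A t * deriv A t - B t * deriv B t))
        + B t * deriv (fun σ => V₀ σ t) (B t * x - A t * y)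
        + ε * (B t * deriv (fun σ => U₀ σ t) (B t * x - A t * y)) := by
    have hp : HasDerivAt (fun x'' : ℝ =>
        (deriv A t * B t + A t * deriv B t) * (x'' ^ 2 - y ^ 2)
          - 2 * x'' * y * (A t * deriv A t - B t * deriv B t))
        ((deriv A t * B t + A t * deriv B t) * (2 * x)
          - 2 * y * (A t * deriv A t - B t * deriv B t)) x := by
      have ha : HasDerivAt (fun x'' : ℝ => x'' ^ 2 - y ^ 2) (2 * x) x := by
        simpa using (hasDerivAt_pow 2 x).sub_const (y ^ 2)
      have hb : HasDerivAt (fun x'' : ℝ =>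
          2 * x'' * y * (A t * deriv A t - B t * deriv B t))
          (2 * y * (A t * deriv A t - B t * deriv B t)) x := by
        have := (((hasDerivAt_id x).const_mul (2:ℝ)).mul_const y).mul_const
          (A t * deriv A t - B t * deriv B t)
        exact this.congr_deriv (by ring)
      exact (ha.const_mul _).sub hb
    exact (((hp.const_mul _).add
        (hasDerivAt_comp_x (fun σ => V₀ σ t) hVd1 (B t) (A t * y) x)).add
        ((hasDerivAt_comp_x (fun σ => U₀ σ t) hUd1 (B t) (A t * y) x).const_mul ε)).deriv
  have hfy : deriv (fun y' =>
      (1 / (2 * (A t ^ 2 + B t ^ 2))) *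
          ((deriv A t * B t + A t * deriv B t) * (x ^ 2 - y' ^ 2)
            - 2 * x * y' * (A t * deriv A t - B t * deriv B t))
        + V₀ (B t * x - A t * y') t + ε * U₀ (B t * x - A t * y') t) y
      = (1 / (2 * (A t ^ 2 + B t ^ 2))) *
          (-((deriv A t * B t + A t * deriv B t) * (2 * y))
            - 2 * x * (A t * deriv A t - B t * deriv B t))
        + -(A t * deriv (fun σ => V₀ σ t) (B t * x - A t * y))
        + ε * -(A t * deriv (fun σ => U₀ σ t) (B t * x - A t * y)) := by
    have hp : HasDerivAt (fun y'' : ℝ =>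
        (deriv A t * B t + A t * deriv B t) * (x ^ 2 - y'' ^ 2)
          - 2 * x * y'' * (A t * deriv A t - B t * deriv B t))
        (-((deriv A t * B t + A t * deriv B t) * (2 * y))
          - 2 * x * (A t * deriv A t - B t * deriv B t)) y := by
      have ha : HasDerivAt (fun y'' : ℝ => x ^ 2 - y'' ^ 2) (-(2 * y)) y := by
        simpa using (hasDerivAt_pow 2 y).const_sub (x ^ 2)
      have hb : HasDerivAt (fun y'' : ℝ =>
          2 * x * y'' * (A t * deriv A t - B t * deriv B t))
          (2 * x * (A t * deriv A t - B t * deriv B t)) y := by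
        have := ((hasDerivAt_id y).const_mul (2 * x)).mul_const
          (A t * deriv A t - B t * deriv B t)
        exact this.congr_deriv (by ring)
      have := (ha.const_mul (deriv A t * B t + A t * deriv B t)).sub hb
      exact this.congr_deriv (by ring)
    exact (((hp.const_mul _).add
        (hasDerivAt_comp_y (fun σ => V₀ σ t) hVd1 (B t * x) (A t) y)).add
        ((hasDerivAt_comp_y (fun σ => U₀ σ t) hUd1 (B t * x) (A t) y).const_mul ε)).deriv
  rw [hdt, hwx, hwy, hfx, hfy]
  have hR : (A t ^ 2 + B t ^ 2) ≠ 0 := (hAB t).ne'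
  field_simp
  ring
end
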